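/- arXiv:1805.09275 — 12 statements merged into one kernel-verified Lean document; each statement's English description precedes it below -/
import Mathlib

section
/- Let S be a finite set and let T_1, T_2, …, T_m ⊆ S (m ≥ 1) be a collection of subsets, each with at least 3 elements, whose union is S, and such that the graph on {1, …, m} with an edge between i and j whenever T_i ∩ T_j ≠ ∅ is connected. Then the subgroup of the symmetric group on S generated by all even permutations of S whose support is contained in some T_i equals the alternating group on S. -/
namespace Stmt0Aux

open Equiv Equiv.Perm Finset

variable {S : Type*} [DecidableEq S]

/-- The 3-cycle `a → b → c → a`. -/
def c3 (a b c : S) : Equiv.Perm S := Equiv.swap a c * Equiv.swap a b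

variable {a b c : S}

lemma c3_apply_a (hba : b ≠ a) (hbc : b ≠ c) : c3 a b c a = b := by
  simp [c3, Equiv.swap_apply_of_ne_of_ne hba hbc]

lemma c3_apply_b : c3 a b c b = c := by
  simp [c3]

lemma c3_apply_c (hca : c ≠ a) (hcb : c ≠ b) : c3 a b c c = a := by
  simp [c3, Equiv.swap_apply_of_ne_of_ne hca hcb]

lemma c3_apply_fix {x : S} (hxa : x ≠ a) (hxb : x ≠ b) (hxc : x ≠ c) : c3 a b c x = x := by
  simp [c3, Equiv.swap_apply_of_ne_of_ne, hxa, hxb, hxc]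

lemma eq_c3 {σ : Equiv.Perm S} (hab : a ≠ b) (hac : a ≠ c) (hbc : b ≠ c)
    (h1 : σ a = b) (h2 : σ b = c) (h3 : σ c = a)
    (h4 : ∀ x, x ≠ a → x ≠ b → x ≠ c → σ x = x) : σ = c3 a b c := by
  ext x
  rcases eq_or_ne x a with rfl | hxa
  · rw [h1, c3_apply_a hab.symm hbc]
  rcases eq_or_ne x b with rfl | hxb
  · rw [h2, c3_apply_b]
  rcases eq_or_ne x c with rfl | hxc
  · rw [h3, c3_apply_c hac.symm hbc.symm]
  · rw [h4 x hxa hxb hxc, c3_apply_fix hxa hxb hxc]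

lemma c3_cyclic (hab : a ≠ b) (hac : a ≠ c) (hbc : b ≠ c) : c3 a b c = c3 b c a :=
  eq_c3 hbc hab.symm hac.symm c3_apply_b (c3_apply_c hac.symm hbc.symm)
    (c3_apply_a hab.symm hbc)
    (fun x hxb hxc hxa => c3_apply_fix hxa hxb hxc)

lemma c3_cyclic' (hab : a ≠ b) (hac : a ≠ c) (hbc : b ≠ c) : c3 a b c = c3 c a b := by
  rw [c3_cyclic hab hac hbc, c3_cyclic hbc hab.symm hac.symm]

lemma c3_inv : (c3 a b c)⁻¹ = c3 a c b := by
  apply inv_eq_of_mul_eq_one_right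
  simp [c3, mul_assoc]

lemma c3_conj (g : Equiv.Perm S) : g * c3 a b c * g⁻¹ = c3 (g a) (g b) (g c) := by
  rw [c3, c3, Equiv.swap_apply_apply, Equiv.swap_apply_apply]
  group

lemma c3_mul {p q u v : S} (hpq : p ≠ q) (hpu : p ≠ u) (hpv : p ≠ v)
    (hqu : q ≠ u) (hqv : q ≠ v) (huv : u ≠ v) :
    c3 p q u * c3 p v q = c3 p v u := by
  apply eq_c3 hpv hpu (Ne.symm huv)
  · rw [Equiv.Perm.mul_apply, c3_apply_a hpv.symm (Ne.symm hqv),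
      c3_apply_fix hpv.symm hqv.symm huv.symm]
  · rw [Equiv.Perm.mul_apply, c3_apply_b, c3_apply_b]
  · rw [Equiv.Perm.mul_apply, c3_apply_fix hpu.symm huv hqu.symm,
      c3_apply_c hpu.symm hqu.symm]
  · intro x hxp hxv hxu
    rcases eq_or_ne x q with rfl | hxq
    · rw [Equiv.Perm.mul_apply, c3_apply_c hpq.symm hqv, c3_apply_a hpq.symm hqu]
    · rw [Equiv.Perm.mul_apply, c3_apply_fix hxp hxv hxq, c3_apply_fix hxp hxq hxu]

/-- All 3-cycles with support in `U` belong to `H`. -/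
def AllC3 (H : Subgroup (Equiv.Perm S)) (U : Finset S) : Prop :=
  ∀ ⦃a b c : S⦄, a ∈ U → b ∈ U → c ∈ U → a ≠ b → a ≠ c → b ≠ c → c3 a b c ∈ H

lemma exists_third {V : Finset S} (h3 : 3 ≤ V.card) (x y : S) :
    ∃ z ∈ V, z ≠ x ∧ z ≠ y := by
  have h2 : ({x, y} : Finset S).card ≤ 2 := by
    apply le_trans (Finset.card_insert_le _ _); simp
  have hpos : 0 < (V \ {x, y}).card := by
    have := Finset.card_le_card_sdiff_add_card (s := V) (t := {x, y})
    omega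
  obtain ⟨z, hz⟩ := Finset.card_pos.1 hpos
  rw [Finset.mem_sdiff, Finset.mem_insert, Finset.mem_singleton] at hz
  exact ⟨z, hz.1, fun h => hz.2 (Or.inl h), fun h => hz.2 (Or.inr h)⟩

lemma exists_pair {U : Finset S} (h3 : 3 ≤ U.card) (x : S) :
    ∃ a ∈ U, ∃ b ∈ U, a ≠ b ∧ a ≠ x ∧ b ≠ x := by
  have hpos : 1 < (U \ {x}).card := by
    have := Finset.card_le_card_sdiff_add_card (s := U) (t := {x})
    simp only [Finset.card_singleton] at this
    omega
  obtain ⟨a, ha, b, hb, hab⟩ := Finset.one_lt_card.1 hpos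
  rw [Finset.mem_sdiff, Finset.mem_singleton] at ha hb
  exact ⟨a, ha.1, b, hb.1, hab, ha.2, hb.2⟩

lemma extend {H : Subgroup (Equiv.Perm S)} {U : Finset S} (hH : AllC3 H U) {p a b : S}
    (hp : p ∉ U) (ha : a ∈ U) (hb : b ∈ U) (hab : a ≠ b) (hseed : c3 p a b ∈ H) :
    ∀ u v, u ∈ U → v ∈ U → u ≠ v → c3 p u v ∈ H := by
  have hne : ∀ {x : S}, x ∈ U → p ≠ x := fun hx h => hp (h ▸ hx)
  have rev : ∀ u v, u ∈ U → v ∈ U → u ≠ v → c3 p u v ∈ H → c3 p v u ∈ H := by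
    intro u v _ _ _ h
    have := H.inv_mem h
    rwa [c3_inv] at this
  have mov : ∀ u v t, u ∈ U → v ∈ U → t ∈ U → u ≠ v → t ≠ u → t ≠ v →
      c3 p u v ∈ H → c3 p v t ∈ H := by
    intro u v t hu hv ht huv htu htv h
    have hg : c3 u v t ∈ H := hH hu hv ht huv (Ne.symm htu) (Ne.symm htv)
    have hm := H.mul_mem (H.mul_mem hg h) (H.inv_mem hg)
    rw [c3_conj, c3_apply_fix (hne hu) (hne hv) (hne ht),
      c3_apply_a huv.symm (Ne.symm htv), c3_apply_b] at hm
    exact hm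
  intro u v hu hv huv
  obtain ⟨s, hs, hsu, hps⟩ : ∃ s, s ∈ U ∧ s ≠ u ∧ c3 p s u ∈ H := by
    rcases eq_or_ne u b with rfl | hub
    · exact ⟨a, ha, hab, hseed⟩
    rcases eq_or_ne u a with rfl | hua
    · exact ⟨b, hb, hab.symm, rev _ _ ha hb hab hseed⟩
    · exact ⟨b, hb, Ne.symm hub, mov a b u ha hb hu hab hua hub hseed⟩
  rcases eq_or_ne v s with rfl | hvs
  · exact rev v u hs hu hsu hps
  · exact mov s u v hs hu hv hsu hvs huv.symm hps

lemma one_side {H : Subgroup (Equiv.Perm S)} {U V : Finset S}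
    (hU : AllC3 H U) (hV : AllC3 H V) (hU3 : 3 ≤ U.card) (hV3 : 3 ≤ V.card)
    {w : S} (hwU : w ∈ U) (hwV : w ∈ V) :
    ∀ p u v, p ∈ V → u ∈ U → v ∈ U → p ≠ u → p ≠ v → u ≠ v → c3 p u v ∈ H := by
  intro p u v hpV hu hv hpu hpv huv
  by_cases hpU : p ∈ U
  · exact hU hpU hu hv hpu hpv huv
  have hneU : ∀ {x : S}, x ∈ U → p ≠ x := fun hx h => hpU (h ▸ hx)
  have hpw : p ≠ w := hneU hwU
  obtain ⟨v₂, hv₂V, hv₂w, hv₂p⟩ := exists_third hV3 w p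
  by_cases hv₂U : v₂ ∈ U
  · have hseed : c3 p w v₂ ∈ H := hV hpV hwV hv₂V hpw (Ne.symm hv₂p) (Ne.symm hv₂w)
    exact extend hU hpU hwU hv₂U (Ne.symm hv₂w) hseed u v hu hv huv
  · have hneU₂ : ∀ {x : S}, x ∈ U → v₂ ≠ x := fun hx h => hv₂U (h ▸ hx)
    obtain ⟨u₁, hu₁, u₂, hu₂, h12, h1w, h2w⟩ := exists_pair hU3 w
    have s₁ : c3 p v₂ w ∈ H := hV hpV hv₂V hwV (Ne.symm hv₂p) hpw hv₂w
    have conj : ∀ x y : S, x ∈ U → y ∈ U → x ≠ y → x ≠ w → y ≠ w → c3 p v₂ x ∈ H := by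
      intro x y hx hy hxy hxw hyw
      have hg : c3 w x y ∈ H := hU hwU hx hy (Ne.symm hxw) (Ne.symm hyw) hxy
      have hm := H.mul_mem (H.mul_mem hg s₁) (H.inv_mem hg)
      rw [c3_conj, c3_apply_fix hpw (hneU hx) (hneU hy),
        c3_apply_fix hv₂w (hneU₂ hx) (hneU₂ hy),
        c3_apply_a hxw hxy] at hm
      exact hm
    have s₂ : c3 p v₂ u₁ ∈ H := conj u₁ u₂ hu₁ hu₂ h12 h1w h2w
    have s₃ : c3 p v₂ u₂ ∈ H := conj u₂ u₁ hu₂ hu₁ (Ne.symm h12) h2w h1w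
    have s₄ : c3 p u₂ v₂ ∈ H := by
      have := H.inv_mem s₃
      rwa [c3_inv] at this
    have hseed : c3 p u₂ u₁ ∈ H := by
      have hm := H.mul_mem s₂ s₄
      rwa [c3_mul (Ne.symm hv₂p) (hneU hu₁) (hneU hu₂) (hneU₂ hu₁) (hneU₂ hu₂)
        h12] at hm
    exact extend hU hpU hu₂ hu₁ (Ne.symm h12) hseed u v hu hv huv

lemma merge {H : Subgroup (Equiv.Perm S)} {U V : Finset S}
    (hU : AllC3 H U) (hV : AllC3 H V) (hU3 : 3 ≤ U.card) (hV3 : 3 ≤ V.card)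
    {w : S} (hwU : w ∈ U) (hwV : w ∈ V) : AllC3 H (U ∪ V) := by
  have cl1 := one_side hU hV hU3 hV3 hwU hwV
  have cl2 := one_side hV hU hV3 hU3 hwV hwU
  have aux : ∀ a b c : S, a ∈ V → a ∉ U → b ∈ U ∪ V → c ∈ U ∪ V →
      a ≠ b → a ≠ c → b ≠ c → c3 a b c ∈ H := by
    intro a b c haV haU hb hc hab hac hbc
    by_cases hbU : b ∈ U
    · by_cases hcU : c ∈ U
      · exact cl1 a b c haV hbU hcU hab hac hbc
      · have hcV : c ∈ V := (Finset.mem_union.1 hc).resolve_left hcU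
        rw [c3_cyclic hab hac hbc]
        exact cl2 b c a hbU hcV haV hbc hab.symm hac.symm
    · have hbV : b ∈ V := (Finset.mem_union.1 hb).resolve_left hbU
      by_cases hcU : c ∈ U
      · rw [c3_cyclic' hab hac hbc]
        exact cl2 c a b hcU haV hbV hac.symm hbc.symm hab
      · have hcV : c ∈ V := (Finset.mem_union.1 hc).resolve_left hcU
        exact hV haV hbV hcV hab hac hbc
  intro a b c ha hb hc hab hac hbc
  by_cases haU : a ∈ U
  · by_cases hbU : b ∈ U
    · by_cases hcU : c ∈ U
      · exact hU haU hbU hcU hab hac hbc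
      · have hcV : c ∈ V := (Finset.mem_union.1 hc).resolve_left hcU
        rw [c3_cyclic' hab hac hbc]
        exact aux c a b hcV hcU (Finset.mem_union_left _ haU) (Finset.mem_union_left _ hbU)
          hac.symm hbc.symm hab
    · have hbV : b ∈ V := (Finset.mem_union.1 hb).resolve_left hbU
      rw [c3_cyclic hab hac hbc]
      exact aux b c a hbV hbU hc (Finset.mem_union_left _ haU) hbc hab.symm hac.symm
  · have haV : a ∈ V := (Finset.mem_union.1 ha).resolve_left haU
    exact aux a b c haV haU hb hc hab hac hbc

lemma threeCycle_c3 [Fintype S] {σ : Equiv.Perm S} (h : σ.support.card = 3) :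
    ∃ a b c : S, a ≠ b ∧ a ≠ c ∧ b ≠ c ∧ σ = c3 a b c := by
  have hne : σ.support.Nonempty := by rw [← Finset.card_pos, h]; norm_num
  obtain ⟨a, ha⟩ := hne
  have h1 : σ a ≠ a := Equiv.Perm.mem_support.1 ha
  have hb : σ a ∈ σ.support := Equiv.Perm.apply_mem_support.2 ha
  have h2 : σ (σ a) ≠ σ a := Equiv.Perm.mem_support.1 hb
  have hc : σ (σ a) ∈ σ.support := Equiv.Perm.apply_mem_support.2 hb
  have hab : a ≠ σ a := h1.symm
  have hbc : σ a ≠ σ (σ a) := h2.symm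
  have hac : a ≠ σ (σ a) := by
    rintro heq
    have hsub : ({a, σ a} : Finset S) ⊆ σ.support := by
      intro x hx
      rw [Finset.mem_insert, Finset.mem_singleton] at hx
      rcases hx with rfl | rfl
      · exact ha
      · exact hb
    have hcard2 : ({a, σ a} : Finset S).card = 2 := by
      rw [Finset.card_insert_of_notMem (by simpa using hab), Finset.card_singleton]
    have hd : (σ.support \ {a, σ a}).Nonempty := by
      rw [← Finset.card_pos, Finset.card_sdiff_of_subset hsub, h, hcard2]
      norm_num
    obtain ⟨d, hd⟩ := hd
    rw [Finset.mem_sdiff, Finset.mem_insert, Finset.mem_singleton] at hd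
    obtain ⟨hdS, hdne⟩ := hd
    push_neg at hdne
    have hsub3 : ({a, σ a, d} : Finset S) ⊆ σ.support := by
      intro x hx
      rw [Finset.mem_insert, Finset.mem_insert, Finset.mem_singleton] at hx
      rcases hx with rfl | rfl | rfl
      · exact ha
      · exact hb
      · exact hdS
    have hcard3 : ({a, σ a, d} : Finset S).card = 3 := by
      rw [Finset.card_insert_of_notMem (by simp [hab, Ne.symm hdne.1]),
        Finset.card_insert_of_notMem (by simp [Ne.symm hdne.2]), Finset.card_singleton]
    have hsupp : ({a, σ a, d} : Finset S) = σ.support :=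
      Finset.eq_of_subset_of_card_le hsub3 (by rw [h, hcard3])
    have hdd : σ d ∈ σ.support := Equiv.Perm.apply_mem_support.2 hdS
    rw [← hsupp, Finset.mem_insert, Finset.mem_insert, Finset.mem_singleton] at hdd
    rcases hdd with h' | h' | h'
    · rw [heq] at h'
      exact hdne.2 (σ.injective h')
    · exact hdne.1 (σ.injective h')
    · exact (Equiv.Perm.mem_support.1 hdS) h'
  have hsub3 : ({a, σ a, σ (σ a)} : Finset S) ⊆ σ.support := by
    intro x hx
    rw [Finset.mem_insert, Finset.mem_insert, Finset.mem_singleton] at hx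
    rcases hx with rfl | rfl | rfl
    · exact ha
    · exact hb
    · exact hc
  have hcard3 : ({a, σ a, σ (σ a)} : Finset S).card = 3 := by
    rw [Finset.card_insert_of_notMem (by simp [hab, hac]),
      Finset.card_insert_of_notMem (by simp [hbc]), Finset.card_singleton]
  have hsupp : ({a, σ a, σ (σ a)} : Finset S) = σ.support :=
    Finset.eq_of_subset_of_card_le hsub3 (by rw [h, hcard3])
  have hca : σ (σ (σ a)) = a := by
    have hmem : σ (σ (σ a)) ∈ σ.support := Equiv.Perm.apply_mem_support.2 hc
    rw [← hsupp, Finset.mem_insert, Finset.mem_insert, Finset.mem_singleton] at hmem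
    rcases hmem with h' | h' | h'
    · exact h'
    · exact absurd (σ.injective h') (Ne.symm hac)
    · exact absurd h' (Equiv.Perm.mem_support.1 hc)
  refine ⟨a, σ a, σ (σ a), hab, hac, hbc, eq_c3 hab hac hbc rfl rfl hca ?_⟩
  intro x hxa hxb hxc
  apply Equiv.Perm.notMem_support.1
  rw [← hsupp]
  simp [hxa, hxb, hxc]

end Stmt0Aux

open Stmt0Aux Finset Equiv Equiv.Perm

/-- If `T 1, …, T m` are subsets of a finite set `S`, each with at least 3
elements, covering `S`, and forming a connected intersection graph, then the even
permutations of `S` supported in some `T i` generate the alternating group on `S`. -/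
theorem stmt_0 {S : Type*} [Fintype S] [DecidableEq S] {m : ℕ} (hm : 1 ≤ m)
    (T : Fin m → Finset S)
    (hcard : ∀ i, 3 ≤ (T i).card)
    (hunion : ∀ x : S, ∃ i, x ∈ T i)
    (hconn : (SimpleGraph.fromRel
      (fun i j : Fin m => ((T i) ∩ (T j)).Nonempty)).Connected) :
    Subgroup.closure
        {σ : Equiv.Perm S | σ ∈ alternatingGroup S ∧ ∃ i, ∀ x, x ∉ T i → σ x = x}
      = alternatingGroup S := by
  set H := Subgroup.closure
    {σ : Equiv.Perm S | σ ∈ alternatingGroup S ∧ ∃ i, ∀ x, x ∉ T i → σ x = x} with hH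
  -- Step 1: all 3-cycles within a single `T i` lie in `H`.
  have gen : ∀ i : Fin m, AllC3 H (T i) := by
    intro i a b c ha hb hc hab hac hbc
    apply Subgroup.subset_closure
    refine ⟨?_, i, ?_⟩
    · rw [Equiv.Perm.mem_alternatingGroup]
      simp [c3, Equiv.Perm.sign_swap hac, Equiv.Perm.sign_swap hab]
    · intro x hx
      exact c3_apply_fix (fun h => hx (h ▸ ha)) (fun h => hx (h ▸ hb)) (fun h => hx (h ▸ hc))
  -- Step 2: grow a connected family of indices.
  have key : ∀ (k : ℕ) (A : Finset (Fin m)), A.Nonempty → m ≤ A.card + k →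
      AllC3 H (A.biUnion T) →
      AllC3 H ((Finset.univ : Finset (Fin m)).biUnion T) := by
    intro k
    induction k with
    | zero =>
      intro A hA hle hall
      have hAcard : A.card = Fintype.card (Fin m) := by
        have := Finset.card_le_univ A
        rw [Fintype.card_fin] at this ⊢
        omega
      rw [← Finset.eq_univ_of_card A hAcard]
      exact hall
    | succ k ih =>
      intro A hA hle hall
      by_cases hAu : A = Finset.univ
      · rw [← hAu]; exact hall
      · obtain ⟨j, hj⟩ : ∃ j, j ∉ A := by
          by_contra hcon
          push_neg at hcon
          exact hAu (Finset.eq_univ_iff_forall.2 hcon)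
        obtain ⟨i, hi⟩ := hA
        obtain ⟨p⟩ := hconn.preconnected i j
        obtain ⟨d, _, hd1, hd2⟩ := p.exists_boundary_dart (↑A : Set (Fin m))
          (by simpa using hi) (by simpa using hj)
        have hadj := d.adj
        rw [SimpleGraph.fromRel_adj] at hadj
        obtain ⟨-, hrel⟩ := hadj
        have hwex : ((T d.fst) ∩ (T d.snd)).Nonempty := by
          rcases hrel with h' | h'
          · exact h'
          · rwa [Finset.inter_comm]
        obtain ⟨w, hw⟩ := hwex
        rw [Finset.mem_inter] at hw
        have hd1' : d.fst ∈ A := by simpa using hd1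
        have hd2' : d.snd ∉ A := by simpa using hd2
        have hUcard : 3 ≤ (A.biUnion T).card :=
          le_trans (hcard i) (Finset.card_le_card (Finset.subset_biUnion_of_mem T hi))
        have hnew : AllC3 H ((insert d.snd A).biUnion T) := by
          rw [Finset.biUnion_insert, Finset.union_comm]
          exact merge hall (gen d.snd) hUcard (hcard d.snd)
            (Finset.mem_biUnion.2 ⟨d.fst, hd1', hw.1⟩) hw.2
        exact ih (insert d.snd A) ⟨d.snd, Finset.mem_insert_self _ _⟩
          (by rw [Finset.card_insert_of_notMem hd2']; omega) hnew
  have i₀ : Fin m := ⟨0, hm⟩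
  have base : AllC3 H (({i₀} : Finset (Fin m)).biUnion T) := by
    rw [Finset.singleton_biUnion]
    exact gen i₀
  have univAll : AllC3 H ((Finset.univ : Finset (Fin m)).biUnion T) :=
    key m {i₀} ⟨i₀, Finset.mem_singleton_self i₀⟩
      (by rw [Finset.card_singleton]; omega) base
  have allTriples : ∀ a b c : S, a ≠ b → a ≠ c → b ≠ c → c3 a b c ∈ H := by
    intro a b c hab hac hbc
    have hmem : ∀ x : S, x ∈ (Finset.univ : Finset (Fin m)).biUnion T := by
      intro x
      obtain ⟨i, hi⟩ := hunion x
      exact Finset.mem_biUnion.2 ⟨i, Finset.mem_univ i, hi⟩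
    exact univAll (hmem a) (hmem b) (hmem c) hab hac hbc
  apply le_antisymm
  · exact (Subgroup.closure_le _).2 fun σ hσ => hσ.1
  · rw [← Equiv.Perm.closure_three_cycles_eq_alternating]
    apply (Subgroup.closure_le _).2
    intro σ hσ
    obtain ⟨a, b, c, hab, hac, hbc, rfl⟩ := threeCycle_c3 (card_support_eq_three_iff.2 hσ)
    exact allTriples a b c hab hac hbc
end

section
/- Let n ≥ 2, let G_1, …, G_n be groups, and let f : K → G_1 × G_2 × ⋯ × G_n be a group homomorphism that is 2-locally surjective, and whose abelianization f_ab : K → (G_1)_ab × ⋯ × (G_n)_ab (the composite of f with the product of the abelianization maps) is ⌈(n+1)/2⌉-locally surjective. Then the image of f contains the direct product of the commutator subgroups: every element x of the product with x_i in the commutator subgroup [G_i, G_i] for all i lies in the range of f. -/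
/-!
Call a tuple realised on a finite set `T` of indices if it agrees on `T` with some `f k`; these
tuples form a subgroup. By induction on `|T|`, every tuple of commutators is realised on `T`.
For `|T| ≥ 3` and `i ∈ T`, write `T = S₁ ∪ S₂` with `i ∈ S₁ ∩ S₂` and
`|Sⱼ| ≤ ⌈(|T| + 1) / 2⌉ < |T|`. On each `Sⱼ`, abelian local surjectivity realises any tuple up
to commutators, and the induction hypothesis realises the correction, so `f` is surjective onto
`∏_{Sⱼ} Gₗ`. Lifting `a` at `i` (and `1` elsewhere) on `S₁` and `b` at `i` on `S₂`, the
commutator of the two lifts realises `⁅a, b⁆` at `i` and `1` on the rest of `T`, and such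
elements generate the commutator tuples.
-/

open scoped commutatorElement

theorem Finset.exists_union_eq_card_le_half {α : Type*} [DecidableEq α] {T : Finset α} {i : α}
    (hi : i ∈ T) : ∃ S₁ S₂ : Finset α, i ∈ S₁ ∧ i ∈ S₂ ∧ S₁ ∪ S₂ = T ∧
      S₁.card ≤ (T.card + 2) / 2 ∧ S₂.card ≤ (T.card + 2) / 2 := by
  have hT : 1 ≤ T.card := Finset.card_pos.2 ⟨i, hi⟩
  obtain ⟨S, hiS, hST, hS⟩ := Finset.exists_subsuperset_card_eq (n := (T.card + 1) / 2)
    (Finset.singleton_subset_iff.2 hi) (by rw [Finset.card_singleton]; omega) (by omega)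
  refine ⟨S, insert i (T \ S), hiS (Finset.mem_singleton_self i), Finset.mem_insert_self _ _,
    ?_, by omega, ?_⟩
  · rw [Finset.union_insert, Finset.union_sdiff_of_subset hST, Finset.insert_eq_of_mem hi]
  · calc (insert i (T \ S)).card ≤ (T \ S).card + 1 := Finset.card_insert_le _ _
      _ = T.card - S.card + 1 := by rw [Finset.card_sdiff_of_subset hST]
      _ ≤ (T.card + 2) / 2 := by omega

namespace MonoidHom

variable {ι K : Type*} [Group K] {G : ι → Type*} [∀ i, Group (G i)]

def rangeOn (f : K →* ∀ i, G i) (T : Finset ι) : Subgroup (∀ i, G i) where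
  carrier := {x | ∃ k, ∀ i ∈ T, f k i = x i}
  one_mem' := ⟨1, fun _ _ => by simp⟩
  mul_mem' := by
    rintro x y ⟨k, hk⟩ ⟨l, hl⟩
    exact ⟨k * l, fun i hi => by simp [hk i hi, hl i hi]⟩
  inv_mem' := by
    rintro x ⟨k, hk⟩
    exact ⟨k⁻¹, fun i hi => by simp [hk i hi]⟩

def piAbelianization (f : K →* ∀ i, G i) : K →* ∀ i, Abelianization (G i) :=
  MonoidHom.pi fun i => Abelianization.of.comp ((Pi.evalMonoidHom G i).comp f)

variable {f : K →* ∀ i, G i} {S T : Finset ι}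

@[simp]
theorem mem_rangeOn {x : ∀ i, G i} : x ∈ f.rangeOn T ↔ ∃ k, ∀ i ∈ T, f k i = x i := .rfl

@[simp]
theorem piAbelianization_apply (k : K) (i : ι) :
    f.piAbelianization k i = Abelianization.of (f k i) := rfl

theorem apply_mem_rangeOn (k : K) : f k ∈ f.rangeOn T := mem_rangeOn.2 ⟨k, fun _ _ => rfl⟩

theorem rangeOn_univ [Fintype ι] : f.rangeOn Finset.univ = f.range := by
  ext x
  simp [funext_iff]

theorem rangeOn_anti (h : S ⊆ T) : f.rangeOn T ≤ f.rangeOn S :=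
  fun _ ⟨k, hk⟩ => mem_rangeOn.2 ⟨k, fun i hi => hk i (h hi)⟩

theorem rangeOn_eq_top_of_surjective (h : Function.Surjective fun k => fun i : T => f k i) :
    f.rangeOn T = ⊤ := by
  refine eq_top_iff.2 fun x _ => ?_
  obtain ⟨k, hk⟩ := h fun i : T => x i
  exact mem_rangeOn.2 ⟨k, fun i hi => congrFun hk ⟨i, hi⟩⟩

theorem rangeOn_eq_top_of_card_le [Fintype ι] {m : ℕ} (hm : m ≤ Fintype.card ι)
    (h : ∀ s : Finset ι, s.card = m → f.rangeOn s = ⊤) (hT : T.card ≤ m) : f.rangeOn T = ⊤ := by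
  obtain ⟨s, hTs, hs⟩ := Finset.exists_superset_card_eq hT hm
  exact eq_top_iff.2 ((h s hs).symm.le.trans (rangeOn_anti hTs))

theorem mem_rangeOn_of_forall_mulSingle_mem [DecidableEq ι] {x : ∀ i, G i}
    (h : ∀ i ∈ T, Pi.mulSingle i (x i) ∈ f.rangeOn T) : x ∈ f.rangeOn T := by
  obtain ⟨k, hk⟩ := Submonoid.pi_mem_of_mulSingle_mem_aux (H := f.rangeOn T) T
    (fun i => if i ∈ T then x i else 1) (fun i hi => if_neg hi)
    (fun i hi => by simpa only [hi, if_true] using h i hi)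
  exact mem_rangeOn.2 ⟨k, fun i hi => by simpa [hi] using hk i hi⟩

theorem rangeOn_eq_top_of_piAbelianization (hab : f.piAbelianization.rangeOn T = ⊤)
    (hcomm : ∀ x : ∀ i, G i, (∀ i ∈ T, x i ∈ commutator (G i)) → x ∈ f.rangeOn T) :
    f.rangeOn T = ⊤ := by
  refine eq_top_iff.2 fun x _ => ?_
  obtain ⟨k, hk⟩ := mem_rangeOn.1 (hab ▸ Subgroup.mem_top fun i => Abelianization.of (x i))
  have hquot : (f k)⁻¹ * x ∈ f.rangeOn T := hcomm _ fun i hi => by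
    rw [← Abelianization.ker_of]
    exact Abelianization.of.eq_iff.1 (hk i hi).symm
  simpa using mul_mem (apply_mem_rangeOn k) hquot

theorem mulSingle_commutatorElement_mem_rangeOn [DecidableEq ι] {i : ι} (hiS : i ∈ S)
    (hiT : i ∈ T) {a b : G i} (ha : Pi.mulSingle i a ∈ f.rangeOn S)
    (hb : Pi.mulSingle i b ∈ f.rangeOn T) : Pi.mulSingle i ⁅a, b⁆ ∈ f.rangeOn (S ∪ T) := by
  obtain ⟨y, hy⟩ := ha
  obtain ⟨z, hz⟩ := hb
  refine mem_rangeOn.2 ⟨⁅y, z⁆, fun j hj => ?_⟩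
  rw [map_commutatorElement]
  rcases eq_or_ne j i with rfl | hji
  · simp [commutatorElement_def, hy j hiS, hz j hiT]
  · rcases Finset.mem_union.1 hj with hj | hj
    · simp [commutatorElement_def, hy j hj, hji]
    · simp [commutatorElement_def, hz j hj, hji]

theorem map_mulSingle_commutator_le_rangeOn [DecidableEq ι] {i : ι} (hiS : i ∈ S) (hiT : i ∈ T)
    (hS : f.rangeOn S = ⊤) (hT : f.rangeOn T = ⊤) :
    (commutator (G i)).map (MonoidHom.mulSingle G i) ≤ f.rangeOn (S ∪ T) := by
  rw [Subgroup.map_le_iff_le_comap, commutator_def, Subgroup.commutator_le]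
  exact fun a _ b _ => mulSingle_commutatorElement_mem_rangeOn hiS hiT
    (hS ▸ Subgroup.mem_top _) (hT ▸ Subgroup.mem_top _)

theorem mem_rangeOn_of_forall_mem_commutator [DecidableEq ι] {r : ℕ}
    (h₂ : ∀ s : Finset ι, s.card ≤ 2 → f.rangeOn s = ⊤)
    (hab : ∀ s : Finset ι, s.card ≤ r → f.piAbelianization.rangeOn s = ⊤)
    (hT : T.card < 2 * r) {x : ∀ i, G i} (hx : ∀ i ∈ T, x i ∈ commutator (G i)) :
    x ∈ f.rangeOn T := by
  induction hn : T.card using Nat.strong_induction_on generalizing T x with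
  | _ n ih =>
  subst hn
  by_cases hT2 : T.card ≤ 2
  · exact h₂ T hT2 ▸ Subgroup.mem_top x
  have hsmall : ∀ S : Finset ι, S.card ≤ (T.card + 2) / 2 → f.rangeOn S = ⊤ := fun S hS =>
    rangeOn_eq_top_of_piAbelianization (hab S (by omega))
      fun y hy => ih S.card (by omega) (by omega) hy rfl
  refine mem_rangeOn_of_forall_mulSingle_mem fun i hi => ?_
  obtain ⟨S₁, S₂, hi₁, hi₂, hT', hS₁, hS₂⟩ := Finset.exists_union_eq_card_le_half hi
  rw [← hT']
  exact map_mulSingle_commutator_le_rangeOn hi₁ hi₂ (hsmall S₁ hS₁) (hsmall S₂ hS₂)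
    ⟨x i, hx i hi, rfl⟩

end MonoidHom

/-- after Ribet–Serre: if `f : K → G 1 × ⋯ × G n` is 2-locally surjective
and its abelianization is ⌈(n+1)/2⌉-locally surjective, then the image of `f` contains the
direct product of the commutator subgroups.  (Here `(n+2)/2` is natural-number division,
which equals `⌈(n+1)/2⌉`.) -/
theorem stmt_1 {n : ℕ} (hn : 2 ≤ n) {K : Type*} [Group K] {G : Fin n → Type*}
    [∀ i, Group (G i)] (f : K →* ∀ i, G i)
    (h2 : ∀ s : Finset (Fin n), s.card = 2 →
      Function.Surjective (fun k => (fun i : s => f k i.1)))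
    (hab : ∀ s : Finset (Fin n), s.card = (n + 2) / 2 →
      Function.Surjective (fun k => (fun i : s => Abelianization.of (f k i.1)))) :
    ∀ x : ∀ i, G i, (∀ i, x i ∈ commutator (G i)) → x ∈ f.range := by
  intro x hx
  rw [← MonoidHom.rangeOn_univ]
  refine MonoidHom.mem_rangeOn_of_forall_mem_commutator (r := (n + 2) / 2)
    (fun s hs => MonoidHom.rangeOn_eq_top_of_card_le (by rwa [Fintype.card_fin])
      (fun t ht => MonoidHom.rangeOn_eq_top_of_surjective (h2 t ht)) hs)
    (fun s hs => MonoidHom.rangeOn_eq_top_of_card_le (by rw [Fintype.card_fin]; omega)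
      (fun t ht => MonoidHom.rangeOn_eq_top_of_surjective (hab t ht)) hs)
    (by rw [Finset.card_univ, Fintype.card_fin]; omega) fun i _ => hx i
end

section
/- Let K be a group, let G_1, …, G_n be non-abelian simple groups, and let f : K → G_1 × G_2 × ⋯ × G_n be a group homomorphism such that each component homomorphism f_i : K → G_i (the composite of f with the i-th projection) is surjective, and such that for all i ≠ j there is no group isomorphism α : G_i ≅ G_j with f_j = α ∘ f_i. Then f is surjective. -/
/-!
Induct on `n`, with `H` the image of `f`. By induction `H` maps onto the product of the first `n`
factors. The elements of `H` supported on the last coordinate form a normal subgroup `N` of the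
simple group `G (last n)`, normal because `H` maps onto that factor. If `N` is everything, `H` is
everything. If `N` is trivial, the last coordinate on `H` is a function of the others, i.e. a
surjection from `∏ i < n, G i` onto `G (last n)`; the images of the factors under such a map are
commuting normal subgroups of a non-abelian simple group, so only one of them is nontrivial and the
map is an isomorphism on that factor, which makes two components of `f` equivalent.
-/

open Function

theorem Pi.mul_mulSingle_mul_inv {ι : Type*} [DecidableEq ι] {G : ι → Type*}
    [∀ i, Group (G i)] (u : ∀ i, G i) (i : ι) (g : G i) :
    u * Pi.mulSingle i g * u⁻¹ = Pi.mulSingle i (u i * g * (u i)⁻¹) := by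
  funext j
  rcases eq_or_ne j i with rfl | hji
  · simp
  · simp [Pi.mulSingle_eq_of_ne hji]

theorem MonoidHom.injective_of_ne_one {S T : Type*} [Group S] [IsSimpleGroup S] [Group T]
    (f : S →* T) (hf : f ≠ 1) : Injective f := by
  rw [← f.ker_eq_bot_iff]
  exact f.normal_ker.eq_bot_or_eq_top.resolve_right (hf ∘ f.ker_eq_top_iff.mp)

section Pi

variable {ι : Type*} [DecidableEq ι] {G : ι → Type*} [∀ i, Group (G i)]

theorem Subgroup.normal_comap_mulSingle {H : Subgroup (∀ i, G i)} {i : ι}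
    (hH : H.map (Pi.evalMonoidHom G i) = ⊤) : (H.comap (MonoidHom.mulSingle G i)).Normal := by
  refine ⟨fun g hg t => ?_⟩
  obtain ⟨u, hu, rfl⟩ := H.mem_map.mp (hH ▸ Subgroup.mem_top t)
  simpa [← Pi.mul_mulSingle_mul_inv] using H.mul_mem (H.mul_mem hu hg) (H.inv_mem hu)

theorem MonoidHom.normal_range_comp_mulSingle {T : Type*} [Group T] {φ : (∀ i, G i) →* T}
    (hφ : Surjective φ) (i : ι) : (φ.comp (MonoidHom.mulSingle G i)).range.Normal := by
  refine ⟨?_⟩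
  rintro _ ⟨g, rfl⟩ t
  obtain ⟨u, rfl⟩ := hφ t
  exact ⟨u i * g * (u i)⁻¹, by simp [← Pi.mul_mulSingle_mul_inv]⟩

theorem MonoidHom.exists_mulEquiv_apply_eq_of_surjective [Finite ι] [∀ i, IsSimpleGroup (G i)]
    {T : Type*} [Group T] [IsSimpleGroup T] (hT : ∃ a b : T, a * b ≠ b * a)
    {φ : (∀ i, G i) →* T} (hφ : Surjective φ) :
    ∃ j, ∃ e : G j ≃* T, ∀ g, φ g = e (g j) := by
  set ψ : ∀ i, G i →* T := fun i => φ.comp (MonoidHom.mulSingle G i)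
  obtain ⟨a, b, hab⟩ := hT
  have hψ : ∀ i, ψ i = 1 ∨ (ψ i).range = ⊤ := fun i =>
    (normal_range_comp_mulSingle hφ i).eq_bot_or_eq_top.imp_left (ψ i).range_eq_bot_iff.mp
  obtain ⟨j, hj⟩ : ∃ j, (ψ j).range = ⊤ := by
    by_contra! h
    have : φ = 1 := MonoidHom.pi_ext fun i x =>
      DFunLike.congr_fun ((hψ i).resolve_right (h i)) x
    obtain ⟨x, rfl⟩ := hφ a
    obtain ⟨y, rfl⟩ := hφ b
    simp [this] at hab
  have hother : ∀ i ≠ j, ψ i = 1 := by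
    intro i hij
    refine (hψ i).resolve_right fun hi => hab ?_
    obtain ⟨x, rfl⟩ := (ψ i).range_eq_top.mp hi a
    obtain ⟨y, rfl⟩ := (ψ j).range_eq_top.mp hj b
    exact (Pi.mulSingle_commute hij x y).map φ
  have hfac : φ = (ψ j).comp (Pi.evalMonoidHom G j) := MonoidHom.pi_ext fun i x => by
    rcases eq_or_ne i j with rfl | hij
    · simp [ψ]
    · simp only [MonoidHom.comp_apply, Pi.evalMonoidHom_apply, Pi.mulSingle_eq_of_ne hij.symm,
        map_one]
      exact DFunLike.congr_fun (hother i hij) x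
  have hinj : Injective (ψ j) := (ψ j).injective_of_ne_one fun h => by
    simp [h] at hj
  refine ⟨j, .ofBijective (ψ j) ⟨hinj, (ψ j).range_eq_top.mp hj⟩, fun g => ?_⟩
  rw [hfac]
  rfl

end Pi

section Fin

variable {n : ℕ} {G : Fin (n + 1) → Type*} [∀ i, Group (G i)]

variable (G) in
def Fin.initMonoidHom : (∀ i, G i) →* ∀ i : Fin n, G i.castSucc :=
  MonoidHom.pi fun i => Pi.evalMonoidHom G i.castSucc

@[simp]
theorem Fin.initMonoidHom_apply (x : ∀ i, G i) (i : Fin n) :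
    Fin.initMonoidHom G x i = x i.castSucc :=
  rfl

theorem Fin.eq_mulSingle_last_of_initMonoidHom_eq_one {x : ∀ i, G i}
    (hx : Fin.initMonoidHom G x = 1) : x = Pi.mulSingle (Fin.last n) (x (Fin.last n)) := by
  funext i
  induction i using Fin.lastCases with
  | last => simp
  | cast i =>
    rw [Pi.mulSingle_eq_of_ne (Fin.castSucc_lt_last i).ne]
    exact congrFun hx i

theorem Subgroup.eq_top_of_mulSingle_last_mem {H : Subgroup (∀ i, G i)}
    (hinit : H.map (Fin.initMonoidHom G) = ⊤) (hlast : ∀ g, Pi.mulSingle (Fin.last n) g ∈ H) :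
    H = ⊤ := by
  refine eq_top_iff.mpr fun x _ => ?_
  obtain ⟨h, hh, hhx⟩ := H.mem_map.mp (hinit ▸ mem_top (Fin.initMonoidHom G x))
  have hxh : x * h⁻¹ ∈ H := by
    rw [Fin.eq_mulSingle_last_of_initMonoidHom_eq_one (x := x * h⁻¹)
      (by rw [map_mul, map_inv, hhx, mul_inv_cancel])]
    exact hlast _
  simpa using H.mul_mem hxh hh

theorem Subgroup.exists_surjective_last_eq_comp_initMonoidHom {H : Subgroup (∀ i, G i)}
    (hinit : H.map (Fin.initMonoidHom G) = ⊤) (hlast : H.map (Pi.evalMonoidHom G (Fin.last n)) = ⊤)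
    (hN : ∀ g, Pi.mulSingle (Fin.last n) g ∈ H → g = 1) :
    ∃ φ : (∀ i : Fin n, G i.castSucc) →* G (Fin.last n),
      Surjective φ ∧ ∀ h ∈ H, h (Fin.last n) = φ (Fin.initMonoidHom G h) := by
  set p := (Fin.initMonoidHom G).comp H.subtype
  have hp : Surjective p := by
    rw [← MonoidHom.range_eq_top, MonoidHom.range_comp, range_subtype]
    exact hinit
  have hker : p.ker ≤ ((Pi.evalMonoidHom G (Fin.last n)).comp H.subtype).ker := by
    rintro ⟨h, hh⟩ hph
    rw [Fin.eq_mulSingle_last_of_initMonoidHom_eq_one hph] at hh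
    exact hN _ hh
  set φ := p.liftOfSurjective hp ⟨_, hker⟩
  have hφ : ∀ h ∈ H, φ (Fin.initMonoidHom G h) = h (Fin.last n) := fun h hh =>
    p.liftOfRightInverse_comp_apply _ _ _ ⟨h, hh⟩
  refine ⟨φ, fun g => ?_, fun h hh => (hφ h hh).symm⟩
  obtain ⟨h, hh, rfl⟩ := H.mem_map.mp (hlast ▸ mem_top g)
  exact ⟨_, hφ h hh⟩

end Fin

universe u

theorem Subgroup.eq_top_of_map_eval_eq_top_of_not_graph {n : ℕ} {G : Fin n → Type u}
    [∀ i, Group (G i)] [∀ i, IsSimpleGroup (G i)] (hna : ∀ i, ∃ a b : G i, a * b ≠ b * a)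
    {H : Subgroup (∀ i, G i)} (hsurj : ∀ i, H.map (Pi.evalMonoidHom G i) = ⊤)
    (hgraph : ∀ i j, i ≠ j → ∀ α : G i ≃* G j, ¬ ∀ h ∈ H, h j = α (h i)) : H = ⊤ := by
  induction n with
  | zero => exact eq_top_iff.mpr fun x _ => Subsingleton.elim 1 x ▸ H.one_mem
  | succ n ih =>
    have hinit : H.map (Fin.initMonoidHom G) = ⊤ := by
      refine ih (fun i => hna _) (fun i => by rw [map_map]; exact hsurj i.castSucc) ?_
      exact fun i j hij α hα => hgraph _ _ ((Fin.castSucc_injective n).ne hij) α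
        fun h hh => hα _ (mem_map_of_mem _ hh)
    rcases (H.normal_comap_mulSingle (hsurj (Fin.last n))).eq_bot_or_eq_top with hN | hN
    · obtain ⟨φ, hφ, hH⟩ := H.exists_surjective_last_eq_comp_initMonoidHom hinit
        (hsurj _) fun g hg => mem_bot.mp (hN.le hg)
      obtain ⟨j, e, he⟩ := MonoidHom.exists_mulEquiv_apply_eq_of_surjective (hna _) hφ
      exact absurd (fun h hh => (hH h hh).trans (he _)) <|
        hgraph j.castSucc (Fin.last n) (Fin.castSucc_lt_last j).ne e
    · exact H.eq_top_of_mulSingle_last_mem hinit fun g => hN.ge (mem_top g)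

/-- Dunfield–Thurston joint surjectivity: if every component of
`f : K → G 1 × ⋯ × G n` is surjective onto a non-abelian simple group and no two components
are equivalent by an isomorphism, then `f` is surjective. -/
theorem stmt_2 {n : ℕ} {K : Type*} [Group K] {G : Fin n → Type*} [∀ i, Group (G i)]
    [∀ i, IsSimpleGroup (G i)] (hna : ∀ i, ∃ a b : G i, a * b ≠ b * a)
    (f : K →* ∀ i, G i)
    (hsurj : ∀ i, Function.Surjective (fun k => f k i))
    (hneq : ∀ i j, i ≠ j → ∀ α : G i ≃* G j, ¬ (∀ k, f k j = α (f k i))) :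
    Function.Surjective f := by
  refine MonoidHom.range_eq_top.mp <| Subgroup.eq_top_of_map_eval_eq_top_of_not_graph hna
    (fun i => ?_) fun i j hij α hα => hneq i j hij α fun k => hα _ ⟨k, rfl⟩
  rw [MonoidHom.map_range, MonoidHom.range_eq_top]
  exact hsurj i
end

section
/- Let K be a group and let N_1, N_2, …, N_n be pairwise distinct normal subgroups of K such that each quotient K/N_i is a non-abelian simple group. Then K/N_1 is isomorphic as a group to the quotient (N_2 ∩ N_3 ∩ ⋯ ∩ N_n) / (N_1 ∩ N_2 ∩ ⋯ ∩ N_n), i.e., the quotient of the intersection of N_2, …, N_n by the intersection of all of N_1, …, N_n (note that the latter is a normal subgroup of K contained in the former). -/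
/-!
Write `M = ⋂_{i ≥ 2} N_i`. A normal subgroup not contained in `N_j` maps onto the simple group
`K/N_j`; if two such subgroups `A`, `B` had `A ∩ B ≤ N_j`, then `[A, B] ≤ N_j` would make
`K/N_j = [AN_j/N_j, BN_j/N_j]` abelian. By induction, `M` is not contained in `N_1`, so
`M` maps onto `K/N_1` with kernel `M ∩ N_1 = ⋂_i N_i`.
-/

namespace Subgroup

variable {K : Type*} [Group K]

section

variable {N : Subgroup K} [N.Normal]

theorem eq_or_eq_top_of_le [IsSimpleGroup (K ⧸ N)] {A : Subgroup K} [A.Normal] (h : N ≤ A) :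
    A = N ∨ A = ⊤ := by
  rcases IsSimpleGroup.eq_bot_or_eq_top_of_normal (A.map (QuotientGroup.mk' N))
    (Normal.map ‹_› _ (QuotientGroup.mk'_surjective N)) with hbot | htop
  · rw [map_eq_bot_iff, QuotientGroup.ker_mk'] at hbot
    exact .inl (le_antisymm hbot h)
  · have := comap_map_eq (QuotientGroup.mk' N) A
    rw [htop, comap_top, QuotientGroup.ker_mk', sup_eq_left.mpr h] at this
    exact .inr this.symm

theorem map_mk'_eq_top_of_not_le [IsSimpleGroup (K ⧸ N)] {A : Subgroup K} [A.Normal]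
    (h : ¬ A ≤ N) : A.map (QuotientGroup.mk' N) = ⊤ :=
  (IsSimpleGroup.eq_bot_or_eq_top_of_normal _
    (Normal.map ‹_› _ (QuotientGroup.mk'_surjective N))).resolve_left
    fun hbot => h (by rwa [map_eq_bot_iff, QuotientGroup.ker_mk'] at hbot)

theorem not_inf_le_of_not_le [IsSimpleGroup (K ⧸ N)] (hN : ¬ IsMulCommutative (K ⧸ N))
    {A B : Subgroup K} [A.Normal] [B.Normal] (hA : ¬ A ≤ N) (hB : ¬ B ≤ N) : ¬ A ⊓ B ≤ N := by
  intro hAB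
  apply hN
  have hcomm : _root_.commutator (K ⧸ N) = ⁅A, B⁆.map (QuotientGroup.mk' N) := by
    rw [map_commutator, map_mk'_eq_top_of_not_le hA, map_mk'_eq_top_of_not_le hB,
      _root_.commutator_def]
  rw [← commutator_eq_bot_iff, hcomm, map_eq_bot_iff, QuotientGroup.ker_mk']
  exact (commutator_le_inf A B).trans hAB

end

variable {ι : Type*} {N : ι → Subgroup K} [∀ i, (N i).Normal] [∀ i, IsSimpleGroup (K ⧸ N i)]

theorem not_le_of_injective (hN : Function.Injective N) {i j : ι} (hij : i ≠ j) : ¬ N i ≤ N j := by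
  intro hle
  rcases eq_or_eq_top_of_le hle with heq | htop
  · exact hij (hN heq.symm)
  · exact QuotientGroup.nontrivial_iff.mp IsSimpleGroup.toNontrivial htop

theorem not_biInf_le (hN : Function.Injective N) (hcomm : ∀ i, ¬ IsMulCommutative (K ⧸ N i))
    {s : Set ι} (hs : s.Finite) {j : ι} (hj : j ∉ s) : ¬ ⨅ i ∈ s, N i ≤ N j := by
  induction s, hs using Set.Finite.induction_on with
  | empty =>
    rw [iInf_emptyset, top_le_iff]
    exact QuotientGroup.nontrivial_iff.mp IsSimpleGroup.toNontrivial
  | @insert i s _ _ ih =>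
    rw [Set.mem_insert_iff, not_or] at hj
    have : (⨅ i ∈ s, N i).Normal :=
      normal_iInf_normal fun _ => normal_iInf_normal fun _ => inferInstance
    rw [iInf_insert]
    exact not_inf_le_of_not_le (hcomm j) (not_le_of_injective hN (Ne.symm hj.1)) (ih hj.2)

end Subgroup

namespace QuotientGroup

variable {G : Type*} [Group G] {N M : Subgroup G} [N.Normal]

noncomputable def subgroupOfEquivOfMapEqTop (h : M.map (mk' N) = ⊤) :
    M ⧸ N.subgroupOf M ≃* G ⧸ N :=
  (quotientMulEquivOfEq (by rw [← MonoidHom.comap_ker, ker_mk']; rfl)).trans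
    (quotientKerEquivOfSurjective ((mk' N).comp M.subtype)
      (MonoidHom.range_eq_top.mp (by rw [MonoidHom.range_comp, M.range_subtype, h])))

end QuotientGroup

/-- if `N 0, …, N (n-1)` are pairwise distinct normal subgroups of `K` with
non-abelian simple quotients, then `K ⧸ N 0` is isomorphic to the quotient of
`⨅ i ≠ 0, N i` by `⨅ i, N i`. -/
theorem stmt_3 {K : Type*} [Group K] {n : ℕ} (hn : 1 ≤ n)
    (N : Fin n → Subgroup K) (hnormal : ∀ i, (N i).Normal)
    (hdist : Function.Injective N)
    (hsimple : ∀ i, IsSimpleGroup (K ⧸ N i))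
    (hna : ∀ i, ∃ a b : K ⧸ N i, a * b ≠ b * a) :
    haveI : (⨅ i, N i).Normal :=
      ⟨fun x hx g => by
        simp only [Subgroup.mem_iInf] at hx ⊢
        exact fun i => (hnormal i).conj_mem x (hx i) g⟩
    Nonempty ((K ⧸ N ⟨0, hn⟩) ≃*
      (↥(⨅ i : {i : Fin n // i ≠ ⟨0, hn⟩}, N i.1) ⧸
        (⨅ i, N i).subgroupOf (⨅ i : {i : Fin n // i ≠ ⟨0, hn⟩}, N i.1))) := by
  set z : Fin n := ⟨0, hn⟩
  have hcomm : ∀ i, ¬ IsMulCommutative (K ⧸ N i) := fun i _ =>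
    let ⟨a, b, hab⟩ := hna i
    hab (mul_comm' a b)
  have hM : ¬ ⨅ i : {i : Fin n // i ≠ z}, N i.1 ≤ N z := by
    rw [iInf_subtype]
    exact Subgroup.not_biInf_le hdist hcomm (Set.toFinite {z}ᶜ) (fun h => h rfl)
  have : (⨅ i, N i).Normal := Subgroup.normal_iInf_normal hnormal
  have : (⨅ i : {i : Fin n // i ≠ z}, N i.1).Normal :=
    Subgroup.normal_iInf_normal fun i => hnormal i.1
  have hker : (N z).subgroupOf (⨅ i : {i : Fin n // i ≠ z}, N i.1) =
      (⨅ i, N i).subgroupOf (⨅ i : {i : Fin n // i ≠ z}, N i.1) := by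
    rw [iInf_split_single N z, iInf_subtype', Subgroup.inf_subgroupOf_right]
  exact ⟨(QuotientGroup.subgroupOfEquivOfMapEqTop
    (Subgroup.map_mk'_eq_top_of_not_le hM)).symm.trans (QuotientGroup.quotientMulEquivOfEq hker)⟩
end

section
/- Let f : K → G_1 × G_2 be a group homomorphism such that the composite of f with the projection onto G_1 is surjective. Suppose G_1 is normally Zornian and that no simple quotient of G_1 is involved in G_2. Then the image of f contains G_1 × {1}, i.e., for every g ∈ G_1 the element (g, 1) lies in the range of f. -/
universe u

/-- A group `G` is normally Zornian if every proper normal subgroup is contained in a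
normal subgroup that is maximal among proper normal subgroups. -/
def NormallyZornian (G : Type u) [Group G] : Prop :=
  ∀ N : Subgroup G, N.Normal → N ≠ ⊤ →
    ∃ M : Subgroup G, M.Normal ∧ M ≠ ⊤ ∧ N ≤ M ∧
      ∀ M' : Subgroup G, M'.Normal → M' ≠ ⊤ → M ≤ M' → M' = M

/-- if `f : K → G₁ × G₂` surjects onto `G₁`, `G₁` is normally Zornian, and no
simple quotient of `G₁` is involved in `G₂`, then the image of `f` contains `G₁ × {1}`. -/
theorem stmt_4 {K G₁ G₂ : Type u} [Group K] [Group G₁] [Group G₂]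
    (f : K →* G₁ × G₂)
    (h1 : Function.Surjective ((MonoidHom.fst G₁ G₂).comp f))
    (hz : NormallyZornian G₁)
    (hq : ∀ (Q : Type u) [Group Q], IsSimpleGroup Q →
      (∃ φ : G₁ →* Q, Function.Surjective φ) →
      ¬ ∃ (H : Subgroup G₂) (ψ : ↥H →* Q), Function.Surjective ψ) :
    ∀ g : G₁, (g, (1 : G₂)) ∈ f.range := by
  classical
  set N : Subgroup G₁ := Subgroup.comap (MonoidHom.inl G₁ G₂) f.range with hN
  have hNnormal : N.Normal := by
    constructor
    intro n hn x
    obtain ⟨k, hk⟩ := h1 x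
    obtain ⟨k₀, hk₀⟩ := hn
    refine ⟨k * k₀ * k⁻¹, ?_⟩
    have hfk : (f k).1 = x := hk
    simp only [map_mul, map_inv, hk₀]
    ext <;> simp [hfk]
  suffices hNt : N = ⊤ by
    intro g
    have hg : g ∈ N := hNt ▸ Subgroup.mem_top g
    exact hg
  by_contra hNt
  obtain ⟨M, hMnorm, hMne, hNM, hMmax⟩ := hz N hNnormal hNt
  haveI := hMnorm
  -- the quotient is simple
  haveI hsimple : IsSimpleGroup (G₁ ⧸ M) := by
    have hnt : Nontrivial (G₁ ⧸ M) := by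
      obtain ⟨x, hx⟩ : ∃ x, x ∉ M := by
        by_contra h
        push_neg at h
        exact hMne ((Subgroup.eq_top_iff' M).2 h)
      exact ⟨QuotientGroup.mk x, 1, by
        simpa [QuotientGroup.eq_one_iff] using hx⟩
    refine ⟨?_⟩
    intro H hH
    set C : Subgroup G₁ := Subgroup.comap (QuotientGroup.mk' M) H with hC
    have hCnorm : C.Normal := Subgroup.Normal.comap hH _
    have hMC : M ≤ C := by
      intro m hm
      have : QuotientGroup.mk' M m = 1 := by
        simpa [QuotientGroup.eq_one_iff] using hm
      simpa [hC, Subgroup.mem_comap, this] using H.one_mem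
    have hmap : Subgroup.map (QuotientGroup.mk' M) C = H :=
      Subgroup.map_comap_eq_self_of_surjective (QuotientGroup.mk'_surjective M) H
    by_cases hCt : C = ⊤
    · right
      rw [← hmap, hCt]
      exact Subgroup.map_top_of_surjective _ (QuotientGroup.mk'_surjective M)
    · left
      have hCM : C = M := hMmax C hCnorm hCt hMC
      rw [← hmap, hCM]
      rw [Subgroup.map_eq_bot_iff]
      intro m hm
      simpa [MonoidHom.mem_ker, QuotientGroup.eq_one_iff] using hm
  set π : K →* G₁ ⧸ M := (QuotientGroup.mk' M).comp ((MonoidHom.fst G₁ G₂).comp f) with hπdef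
  have hπ : Function.Surjective π :=
    (QuotientGroup.mk'_surjective M).comp h1
  set σ : K →* G₂ := (MonoidHom.snd G₁ G₂).comp f with hσdef
  have hker : σ.rangeRestrict.ker ≤ π.ker := by
    intro x hx
    have hx1 : σ x = 1 := by
      have := congrArg (Subtype.val) hx
      simpa using this
    have hfx : f x = ((f x).1, 1) := by
      ext
      · rfl
      · exact hx1
    have hmem : (f x).1 ∈ N := ⟨x, by rw [hfx]; rfl⟩
    have hmemM : (f x).1 ∈ M := hNM hmem
    simp only [MonoidHom.mem_ker, hπdef, MonoidHom.comp_apply]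
    simpa [QuotientGroup.eq_one_iff] using hmemM
  set ψ : σ.range →* G₁ ⧸ M :=
    σ.rangeRestrict.liftOfRightInverse (Function.surjInv σ.rangeRestrict_surjective)
      (Function.rightInverse_surjInv σ.rangeRestrict_surjective) ⟨π, hker⟩ with hψdef
  have hψ : Function.Surjective ψ := by
    intro q
    obtain ⟨k, hk⟩ := hπ q
    exact ⟨σ.rangeRestrict k, by
      rw [hψdef, MonoidHom.liftOfRightInverse_comp_apply]; exact hk⟩
  exact hq (G₁ ⧸ M) hsimple ⟨QuotientGroup.mk' M, QuotientGroup.mk'_surjective M⟩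
    ⟨σ.range, ψ, hψ⟩
end

section
/- Let f : K → G_1 × G_2 be a group homomorphism such that the composite of f with each of the two projections is surjective. Suppose G_1 is normally Zornian and that no simple quotient of G_1 is isomorphic to a quotient of G_2 (i.e., there is no simple group Q admitting surjective homomorphisms from both G_1 and G_2). Then f is surjective. -/
universe u

/-- if `f : K → G₁ × G₂` surjects onto both factors, `G₁` is normally
Zornian, and `G₁` and `G₂` have no common simple quotient, then `f` is surjective. -/
theorem stmt_5 {K G₁ G₂ : Type u} [Group K] [Group G₁] [Group G₂]
    (f : K →* G₁ × G₂)
    (h1 : Function.Surjective ((MonoidHom.fst G₁ G₂).comp f))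
    (h2 : Function.Surjective ((MonoidHom.snd G₁ G₂).comp f))
    (hz : NormallyZornian G₁)
    (hq : ¬ ∃ (Q : Type u) (_ : Group Q), IsSimpleGroup Q ∧
      (∃ φ : G₁ →* Q, Function.Surjective φ) ∧
      (∃ ψ : G₂ →* Q, Function.Surjective ψ)) :
    Function.Surjective f := by
  rw [← MonoidHom.range_eq_top]
  by_contra hH
  set N₁ : Subgroup G₁ := f.range.comap (MonoidHom.inl G₁ G₂) with hN₁def
  have hN₁mem : ∀ g : G₁, g ∈ N₁ ↔ (g, (1 : G₂)) ∈ f.range := fun g => Iff.rfl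
  have hNnormal : N₁.Normal := by
    constructor
    intro n hn a
    obtain ⟨k, hk⟩ := h1 a
    have hk' : (f k).1 = a := hk
    have h1' : ((n, (1:G₂)) : G₁ × G₂) ∈ f.range := (hN₁mem n).mp hn
    have hm := f.range.mul_mem (f.range.mul_mem (⟨k, rfl⟩ : f k ∈ f.range) h1')
      (f.range.inv_mem (⟨k, rfl⟩ : f k ∈ f.range))
    rw [hN₁mem]
    have : f k * (n, 1) * (f k)⁻¹ = (a * n * a⁻¹, (1:G₂)) := by
      rw [Prod.ext_iff]
      constructor
      · simp [hk']
      · simp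
    rwa [this] at hm
  have hNne : N₁ ≠ ⊤ := by
    intro htop
    apply hH
    rw [eq_top_iff]
    rintro ⟨a, b⟩ -
    obtain ⟨k, hk⟩ := h2 b
    have hk' : (f k).2 = b := hk
    have ha : ((a * ((f k).1)⁻¹, (1:G₂)) : G₁ × G₂) ∈ f.range := by
      rw [← hN₁mem]; rw [htop]; trivial
    have hm := f.range.mul_mem ha (⟨k, rfl⟩ : f k ∈ f.range)
    have : ((a * ((f k).1)⁻¹, (1:G₂)) : G₁ × G₂) * f k = (a, b) := by
      rw [Prod.ext_iff]; constructor <;> simp [hk']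
    rwa [this] at hm
  obtain ⟨M, hMnorm, hMne, hNM, hMmax⟩ := hz N₁ hNnormal hNne
  haveI := hMnorm
  apply hq
  haveI : Nontrivial (G₁ ⧸ M) := by
    obtain ⟨g, hg⟩ : ∃ g, g ∉ M := by
      by_contra h; push_neg at h; exact hMne ((Subgroup.eq_top_iff' M).mpr h)
    exact ⟨⟨QuotientGroup.mk g, 1, by simpa [QuotientGroup.eq_one_iff] using hg⟩⟩
  have hsimple : IsSimpleGroup (G₁ ⧸ M) := by
    constructor
    intro A hA
    set B := A.comap (QuotientGroup.mk' M) with hBdef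
    have hBnorm : B.Normal := hA.comap _
    have hMB : M ≤ B := by
      intro m hm
      show QuotientGroup.mk' M m ∈ A
      have : QuotientGroup.mk' M m = 1 := by
        simpa [QuotientGroup.eq_one_iff] using hm
      rw [this]; exact A.one_mem
    by_cases hB : B = ⊤
    · right
      rw [eq_top_iff]
      intro q _
      obtain ⟨g, rfl⟩ := QuotientGroup.mk'_surjective M q
      have : g ∈ B := hB ▸ Subgroup.mem_top g
      exact this
    · left
      have hBM := hMmax B hBnorm hB hMB
      have hA' : A = Subgroup.map (QuotientGroup.mk' M) B :=
        (Subgroup.map_comap_eq_self_of_surjective (QuotientGroup.mk'_surjective M) A).symm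
      rw [hA', hBM]
      ext q
      simp only [Subgroup.mem_map, Subgroup.mem_bot]
      constructor
      · rintro ⟨g, hg, rfl⟩
        simpa [QuotientGroup.eq_one_iff] using hg
      · rintro rfl
        exact ⟨1, M.one_mem, map_one _⟩
  refine ⟨G₁ ⧸ M, inferInstance, hsimple,
    ⟨QuotientGroup.mk' M, QuotientGroup.mk'_surjective M⟩, ?_⟩
  set π₂ : K →* G₂ := (MonoidHom.snd G₁ G₂).comp f with hπ₂def
  set φK : K →* G₁ ⧸ M := (QuotientGroup.mk' M).comp ((MonoidHom.fst G₁ G₂).comp f) with hφKdef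
  have hker : π₂.ker ≤ φK.ker := by
    intro k hk
    have hk2 : (f k).2 = 1 := hk
    have hmem : (f k).1 ∈ N₁ := by
      rw [hN₁mem]
      have : ((f k).1, (1:G₂)) = f k := by rw [Prod.ext_iff]; exact ⟨rfl, hk2.symm⟩
      rw [this]; exact ⟨k, rfl⟩
    show QuotientGroup.mk' M (f k).1 = 1
    simpa [QuotientGroup.eq_one_iff] using hNM hmem
  let e : K ⧸ π₂.ker ≃* G₂ := QuotientGroup.quotientKerEquivOfSurjective π₂ h2
  refine ⟨(QuotientGroup.lift π₂.ker φK hker).comp e.symm.toMonoidHom, ?_⟩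
  intro q
  obtain ⟨g, rfl⟩ := QuotientGroup.mk'_surjective M q
  obtain ⟨k, hk⟩ := h1 g
  have hk' : (f k).1 = g := hk
  refine ⟨e (QuotientGroup.mk k), ?_⟩
  simp only [MonoidHom.comp_apply, MulEquiv.coe_toMonoidHom]
  rw [MulEquiv.symm_apply_apply]
  show φK k = QuotientGroup.mk' M g
  simp [hφKdef, hk']
end

section
/- Let J be a group and n > 1 an integer, and let X = J × Fin n with J acting by left multiplication on the first coordinate. For σ ∈ Sym_J(X), let τ_σ ∈ Perm(Fin n) and c_i(σ) ∈ J (for i ∈ Fin n) be determined by σ(1, i) = (c_i(σ), τ_σ(i)). Then σ lies in the Rubik group Rub_J(X) (the commutator subgroup of Sym_J(X)) if and only if τ_σ is an even permutation of Fin n and the product over i ∈ Fin n of the images of c_i(σ) in the abelianization of J equals the identity. -/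
/-- The subgroup `Sym_J(X)` of permutations of `X = J × Fin n` commuting with the left
multiplication action of `J` on the first coordinate. -/
def EquivariantPerm (J : Type*) [Group J] (n : ℕ) : Subgroup (Equiv.Perm (J × Fin n)) where
  carrier := {σ | ∀ (j : J) (x : J × Fin n), σ (j * x.1, x.2) = (j * (σ x).1, (σ x).2)}
  one_mem' := by intro j x; rfl
  mul_mem' := by
    intro σ τ hσ hτ j x
    simp only [Equiv.Perm.mul_apply]
    rw [hτ, hσ]
  inv_mem' := by
    intro σ hσ j x
    apply σ.injective
    rw [hσ]
    simp

/-- The Rubik group `Rub_J(X)`: the commutator subgroup of `Sym_J(X)`, regarded as a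
subgroup of the symmetric group of `X = J × Fin n`. -/
def RubikGroup (J : Type*) [Group J] (n : ℕ) : Subgroup (Equiv.Perm (J × Fin n)) :=
  ⁅EquivariantPerm J n, EquivariantPerm J n⁆

/-!
`Sym_J(J × Fin n)` is the wreath product `J ≀ Sₙ`: every `σ` is a permutation `τ_σ` of the
copies of `J` composed with right multiplications on the copies. The map
`σ ↦ (sign τ_σ, ∏ [c_i(σ)])` is a homomorphism to an abelian group, so it kills the commutator
subgroup. Conversely, every homomorphism `φ` from `Sym_J` to an abelian group kills the even
permutations (`Aₙ` is generated by 3-cycles, each conjugate to its inverse), and, since the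
copies of `J` are permuted transitively, `φ` of a right multiplication does not depend on the
copy it acts on; hence on right multiplications `φ` factors through `∏ [c_i] ∈ Jᵃᵇ`. Taking for
`φ` the abelianization of `Sym_J` gives the converse.
-/

open Equiv

theorem Equiv.Perm.alternatingGroup_le_ker {α A : Type*} [Fintype α] [DecidableEq α]
    [CommGroup A] (φ : Perm α →* A) : alternatingGroup α ≤ φ.ker := by
  rw [← closure_three_cycles_eq_alternating, Subgroup.closure_le]
  intro c hc
  have hconj : IsConj c c⁻¹ := isConj_iff_cycleType_eq.mpr (cycleType_inv c).symm
  have h2 : φ c ^ 2 = 1 := by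
    rw [sq, mul_eq_one_iff_eq_inv, ← map_inv]
    exact isConj_iff_eq.mp (φ.map_isConj hconj)
  have h3 : φ c ^ 3 = 1 := by rw [← map_pow, ← hc.orderOf, pow_orderOf_eq_one, map_one]
  simpa using pow_gcd_eq_one.mpr ⟨h2, h3⟩

theorem MonoidHom.map_pi_eq_prod_mulSingle {ι A : Type*} {M : ι → Type*} [Fintype ι]
    [DecidableEq ι] [∀ i, Monoid (M i)] [CommMonoid A] (φ : (∀ i, M i) →* A) (x : ∀ i, M i) :
    φ x = ∏ i, φ (Pi.mulSingle i (x i)) := by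
  conv_lhs => rw [← Finset.noncommProd_mulSingle x]
  exact (Finset.map_noncommProd _ _ _ φ).trans (Finset.noncommProd_eq_prod _ _)

namespace EquivariantPerm

variable {J : Type*} [Group J] {n : ℕ}

theorem apply_mk {σ : Perm (J × Fin n)} (hσ : σ ∈ EquivariantPerm J n) (j : J) (i : Fin n) :
    σ (j, i) = (j * (σ (1, i)).1, (σ (1, i)).2) := by
  simpa using hσ j (1, i)

theorem mul_apply_one_mk (σ ρ : EquivariantPerm J n) (i : Fin n) :
    (σ * ρ).1 (1, i) =
      ((ρ.1 (1, i)).1 * (σ.1 (1, (ρ.1 (1, i)).2)).1, (σ.1 (1, (ρ.1 (1, i)).2)).2) :=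
  apply_mk σ.2 _ _

def toEnd : EquivariantPerm J n →* Function.End (Fin n) where
  toFun σ i := (σ.1 (1, i)).2
  map_one' := rfl
  map_mul' σ ρ := funext fun i => by rw [mul_apply_one_mk]; rfl

def toBasePerm : EquivariantPerm J n →* Perm (Fin n) :=
  Perm.equivUnitsEnd.symm.toMonoidHom.comp toEnd.toHomUnits

@[simp] theorem toBasePerm_apply (σ : EquivariantPerm J n) (i : Fin n) :
    toBasePerm σ i = (σ.1 (1, i)).2 := rfl

def coeffProd : EquivariantPerm J n →* Abelianization J where
  toFun σ := ∏ i, Abelianization.of (σ.1 (1, i)).1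
  map_one' := by simp
  map_mul' σ ρ := by
    simp only [mul_apply_one_mk, map_mul, Finset.prod_mul_distrib]
    rw [mul_comm]
    congr 1
    exact Equiv.prod_comp (toBasePerm ρ) fun i => Abelianization.of (σ.1 (1, i)).1

def ofBasePerm : Perm (Fin n) →* EquivariantPerm J n where
  toFun π := ⟨Equiv.prodCongrRight fun _ => π, fun _ _ => rfl⟩
  map_one' := rfl
  map_mul' _ _ := rfl

@[simp] theorem ofBasePerm_apply (π : Perm (Fin n)) (x : J × Fin n) :
    ((ofBasePerm π : EquivariantPerm J n) : Perm (J × Fin n)) x = (x.1, π x.2) := rfl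

/-- The inverse makes `twist` a homomorphism rather than an anti-homomorphism. -/
def twist : (Fin n → J) →* EquivariantPerm J n where
  toFun f := ⟨Equiv.prodCongrLeft fun i => Equiv.mulRight (f i)⁻¹, fun _ _ => by simp [mul_assoc]⟩
  map_one' := Subtype.ext <| Equiv.ext fun ⟨_, _⟩ => by simp
  map_mul' _ _ := Subtype.ext <| Equiv.ext fun ⟨_, _⟩ => by simp [mul_assoc]

@[simp] theorem twist_apply (f : Fin n → J) (x : J × Fin n) :
    (twist f : Perm (J × Fin n)) x = (x.1 * (f x.2)⁻¹, x.2) := rfl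

theorem eq_perm_mul_twist (σ : EquivariantPerm J n) :
    σ = ofBasePerm (toBasePerm σ) * twist fun i => (σ.1 (1, i)).1⁻¹ :=
  Subtype.ext <| Equiv.ext fun ⟨j, i⟩ => by
    simp [apply_mk σ.2 j i]

theorem isConj_twist_comp (f : Fin n → J) (π : Perm (Fin n)) :
    IsConj (twist f) (twist (f ∘ π)) :=
  isConj_iff.mpr ⟨ofBasePerm π⁻¹, by
    rw [← map_inv, inv_inv]
    exact Subtype.ext <| Equiv.ext fun _ => by
      simp only [Subgroup.coe_mul, Perm.mul_apply, ofBasePerm_apply, twist_apply, Perm.coe_inv,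
        symm_apply_apply]
      rfl⟩

theorem map_twist_eq_one {A : Type*} [CommGroup A] (φ : EquivariantPerm J n →* A)
    {f : Fin n → J} (hf : ∏ i, Abelianization.of (f i) = 1) : φ (twist f) = 1 := by
  rcases isEmpty_or_nonempty (Fin n) with hn | ⟨⟨i₀⟩⟩
  · rw [Subsingleton.elim f 1, map_one, map_one]
  set χ := Abelianization.lift ((φ.comp twist).comp (MonoidHom.mulSingle _ i₀))
  have hsingle (i : Fin n) (a : J) : φ (twist (Pi.mulSingle i a)) = χ (Abelianization.of a) := by
    have hconj := isConj_twist_comp (Pi.mulSingle i₀ a) (swap i₀ i)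
    rw [Pi.mulSingle_comp_equiv, symm_swap, swap_apply_left] at hconj
    exact (isConj_iff_eq.mp (φ.map_isConj hconj)).symm
  calc φ (twist f) = ∏ i, φ (twist (Pi.mulSingle i (f i))) :=
        (φ.comp twist).map_pi_eq_prod_mulSingle f
    _ = χ (∏ i, Abelianization.of (f i)) := by simp only [hsingle, map_prod]
    _ = 1 := by rw [hf, map_one]

theorem coe_mem_rubikGroup_iff (σ : EquivariantPerm J n) :
    (σ : Perm (J × Fin n)) ∈ RubikGroup J n ↔ σ ∈ commutator (EquivariantPerm J n) := by
  rw [RubikGroup, ← Subgroup.map_subtype_commutator]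
  exact Subgroup.mem_map_iff_mem (EquivariantPerm J n).subtype_injective

end EquivariantPerm

open EquivariantPerm in
theorem stmt_8_general {J : Type*} [Group J] {n : ℕ}
    (σ : Equiv.Perm (J × Fin n)) (hσ : σ ∈ EquivariantPerm J n) :
    σ ∈ RubikGroup J n ↔
      ∃ τ : Equiv.Perm (Fin n),
        (∀ i : Fin n, (σ (1, i)).2 = τ i) ∧
        Equiv.Perm.sign τ = 1 ∧
        ∏ i : Fin n, Abelianization.of ((σ (1, i)).1) = 1 := by
  lift σ to EquivariantPerm J n using hσ
  rw [coe_mem_rubikGroup_iff]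
  constructor
  · intro h
    refine ⟨toBasePerm σ, fun _ => rfl, ?_, ?_⟩
    · exact Abelianization.commutator_subset_ker (Perm.sign.comp toBasePerm) h
    · exact Abelianization.commutator_subset_ker coeffProd h
  · rintro ⟨τ, hτ, hsign, hprod⟩
    have hbase : toBasePerm σ = τ := Equiv.ext hτ
    rw [← Abelianization.ker_of, MonoidHom.mem_ker, eq_perm_mul_twist σ, map_mul, hbase]
    have hperm : Abelianization.of (ofBasePerm (J := J) τ) = 1 :=
      Perm.alternatingGroup_le_ker (Abelianization.of.comp ofBasePerm)
        (Perm.mem_alternatingGroup.mpr hsign)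
    rw [hperm, map_twist_eq_one _ (by simp [Finset.prod_inv_distrib, hprod]), one_mul]

/-- an equivariant permutation `σ ∈ Sym_J(J × Fin n)` lies in the Rubik group
`Rub_J(J × Fin n)` if and only if the induced permutation `τ_σ` of `Fin n` is even and the
product of the images in the abelianization of `J` of the elements `c_i(σ)` (determined by
`σ (1, i) = (c_i(σ), τ_σ i)`) is trivial. -/
theorem stmt_8 {J : Type*} [Group J] {n : ℕ} (hn : 1 < n)
    (σ : Equiv.Perm (J × Fin n)) (hσ : σ ∈ EquivariantPerm J n) :
    σ ∈ RubikGroup J n ↔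
      ∃ τ : Equiv.Perm (Fin n),
        (∀ i : Fin n, (σ (1, i)).2 = τ i) ∧
        Equiv.Perm.sign τ = 1 ∧
        ∏ i : Fin n, Abelianization.of ((σ (1, i)).1) = 1 :=
  stmt_8_general σ hσ
end

section
/- Let J be a group, let n ≥ 5, and let X = J × Fin n with J acting by left multiplication on the first coordinate. If Q is a simple group and φ : Rub_J(X) → Q is a surjective group homomorphism, then Q is isomorphic to the alternating group on Fin n. -/
/-
`Sym_J(X)` is the wreath product `J ≀ S_n`: each element permutes the fibres `J × {i}` and then
multiplies fibre `i` on the right by some `(v i)⁻¹`. Hence `Rub_J(X)` maps onto the alternating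
group, with kernel `K` consisting of base elements `baseHom v`. Let `ψ` be a simple quotient of
`Rub_J(X)` that does not kill `K`. Then `ψ(K) = Q`, so `ker ψ` still maps onto the alternating
group. Conjugating by `ker ψ` moves the support of a base element without changing its image,
and for `n ≥ 5` any two base elements supported on two points can thus be made disjointly
supported, hence commute in `Q`. As `K` is generated by such elements, `Q = ψ(K)` is abelian;
but `K` lies in the commutator subgroup of `Rub_J(X)`, so `ψ` kills `K` after all. Thus `ψ` factors
through the simple alternating group, and `Q` is isomorphic to it.
-/

open Function

namespace Pi

variable {ι J : Type*} [Group J]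

theorem commute_of_disjoint_mulSupport {v w : ι → J}
    (h : Disjoint (mulSupport v) (mulSupport w)) : Commute v w := by
  funext i
  by_cases hv : v i = 1
  · simp [hv]
  · have hw : w i = 1 := notMem_mulSupport.mp (h.notMem_of_mem_left hv)
    simp [hw]

variable [DecidableEq ι]

theorem mclosure_iUnion_range_mulSingle [Finite ι] :
    Submonoid.closure (⋃ i, Set.range (MonoidHom.mulSingle (fun _ : ι => J) i)) = ⊤ := by
  simp_rw [Submonoid.closure_iUnion, MonoidHom.mclosure_range,
    MonoidHom.mrange_eq_map, Submonoid.iSup_map_mulSingle, Submonoid.pi_top]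

theorem le_of_mulSingle_mul_mulSingle_inv_mem [Finite ι] {W U : Subgroup (ι → J)} (hWU : W ≤ U)
    (k : ι) (hW : ∀ i, i ≠ k → ∀ t, mulSingle i t * mulSingle k t⁻¹ ∈ W)
    (hk : ∀ u, mulSingle k u ∈ U → mulSingle k u ∈ W) : U ≤ W := by
  have key (v : ι → J) : ∃ w ∈ W, ∃ u, v = w * mulSingle k u := by
    induction v using Submonoid.induction_of_closure_eq_top_right
      (mclosure_iUnion_range_mulSingle (ι := ι) (J := J)) with
    | one => exact ⟨1, one_mem _, 1, by simp⟩
    | mul_right v g hg ih =>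
      obtain ⟨i, t, rfl⟩ := Set.mem_iUnion.mp hg
      rw [MonoidHom.mulSingle_apply]
      obtain ⟨w, hw, u, rfl⟩ := ih
      by_cases hik : i = k
      · subst hik
        exact ⟨w, hw, u * t, by rw [mulSingle_mul, mul_assoc]⟩
      · refine ⟨w * (mulSingle i t * mulSingle k t⁻¹), mul_mem hw (hW i hik t), t * u, ?_⟩
        rw [mul_assoc, (mulSingle_commute (f := fun _ => J) (Ne.symm hik) u t).eq, mul_assoc,
          mul_assoc, ← mulSingle_mul, inv_mul_cancel_left]
  intro v hv
  obtain ⟨w, hw, u, rfl⟩ := key v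
  have hu : mulSingle k u ∈ U := by simpa using mul_mem (inv_mem (hWU hw)) hv
  exact mul_mem hw (hk u hu)

end Pi

theorem exists_mem_alternatingGroup_apply_eq {α : Type*} [Fintype α] [DecidableEq α]
    (hα : 4 ≤ Nat.card α) {a b c d : α} (hab : a ≠ b) (hcd : c ≠ d) :
    ∃ σ ∈ alternatingGroup α, σ a = c ∧ σ b = d := by
  have := alternatingGroup.isMultiplyPretransitive α
  have : MulAction.IsMultiplyPretransitive (alternatingGroup α) α 2 :=
    MulAction.isMultiplyPretransitive_of_le (n := Nat.card α - 2) (by omega) (by omega)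
  obtain ⟨σ, hσa, hσb⟩ := MulAction.is_two_pretransitive_iff.mp this hab hcd
  exact ⟨σ, σ.2, hσa, hσb⟩

theorem exists_mem_alternatingGroup_disjoint {α : Type*} [Fintype α] [DecidableEq α]
    (hα : 5 ≤ Nat.card α) {i k : α} (hik : i ≠ k) (i' k' : α) :
    ∃ τ ∈ alternatingGroup α, Disjoint ({τ i, τ k} : Set α) {i', k'} := by
  obtain ⟨c, hc, d, hd, hcd⟩ :
      ∃ c ∈ ({i', k'} : Finset α)ᶜ, ∃ d ∈ ({i', k'} : Finset α)ᶜ, c ≠ d := by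
    rw [← Finset.one_lt_card, Finset.card_compl, ← Nat.card_eq_fintype_card]
    have := Finset.card_le_two (a := i') (b := k')
    omega
  obtain ⟨τ, hτ, rfl, rfl⟩ := exists_mem_alternatingGroup_apply_eq (by omega) hik hcd
  simp only [Finset.mem_compl, Finset.mem_insert, Finset.mem_singleton, not_or] at hc hd
  refine ⟨τ, hτ, ?_⟩
  simp only [Set.disjoint_insert_left, Set.disjoint_singleton_left, Set.mem_insert_iff,
    Set.mem_singleton_iff]
  tauto

namespace MonoidHom

variable {G H Q : Type*} [Group G] [Group H] [Group Q]

theorem nonempty_mulEquiv_of_ker_le [IsSimpleGroup H] [Nontrivial Q] {f : G →* H}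
    (hf : Function.Surjective f) {g : G →* Q} (hg : Function.Surjective g) (hfg : f.ker ≤ g.ker) :
    Nonempty (Q ≃* H) := by
  let χ := f.liftOfSurjective hf ⟨g, hfg⟩
  have hχ (x : G) : χ (f x) = g x := f.liftOfRightInverse_comp_apply _ _ _ x
  have hsurj : Function.Surjective χ := fun q => by
    obtain ⟨x, rfl⟩ := hg q
    exact ⟨f x, hχ x⟩
  have hinj : Function.Injective χ := by
    rw [← ker_eq_bot_iff]
    refine χ.normal_ker.eq_bot_or_eq_top.resolve_right fun htop => ?_
    obtain ⟨q, hq⟩ := exists_ne (1 : Q)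
    obtain ⟨a, rfl⟩ := hsurj q
    exact hq (mem_ker.mp (htop ▸ Subgroup.mem_top a))
  exact ⟨(MulEquiv.ofBijective χ ⟨hinj, hsurj⟩).symm⟩

theorem map_ker_eq_top_of_not_ker_le [IsSimpleGroup Q] {f : G →* H} {g : G →* Q}
    (hg : Function.Surjective g) (hfg : ¬f.ker ≤ g.ker) : f.ker.map g = ⊤ :=
  (f.normal_ker.map g hg).eq_bot_or_eq_top.resolve_left
    fun h => hfg ((Subgroup.map_eq_bot_iff _).mp h)

theorem exists_mem_ker_apply_eq {f : G →* H} {g : G →* Q} (h : f.ker.map g = ⊤) (x : G) :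
    ∃ m ∈ g.ker, f m = f x := by
  obtain ⟨k, hk, hkx⟩ := h.ge (Subgroup.mem_top (g x))
  exact ⟨x * k⁻¹, by simp [hkx], by simp [mem_ker.mp hk]⟩

end MonoidHom

namespace EquivariantPerm

open Equiv Equiv.Perm Subgroup
open scoped commutatorElement

variable {J : Type*} {n : ℕ}

def permHom : Perm (Fin n) →* Perm (J × Fin n) where
  toFun π := Equiv.prodCongr (Equiv.refl J) π
  map_one' := rfl
  map_mul' _ _ := rfl

@[simp]
lemma permHom_apply (π : Perm (Fin n)) (x : J × Fin n) : permHom π x = (x.1, π x.2) := rfl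

variable [Group J]

/-- The inverse in `x * (v i)⁻¹` makes `baseHom` a homomorphism rather than an
anti-homomorphism. -/
def baseHom : (Fin n → J) →* Perm (J × Fin n) where
  toFun v :=
    { toFun := fun x => (x.1 * (v x.2)⁻¹, x.2)
      invFun := fun x => (x.1 * v x.2, x.2)
      left_inv := fun x => by simp
      right_inv := fun x => by simp }
  map_one' := by ext <;> simp
  map_mul' v w := by ext <;> simp [mul_assoc]

@[simp]
lemma baseHom_apply (v : Fin n → J) (x : J × Fin n) : baseHom v x = (x.1 * (v x.2)⁻¹, x.2) :=
  rfl

lemma baseHom_mem (v : Fin n → J) : baseHom v ∈ EquivariantPerm J n := fun _ _ => by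
  simp [mul_assoc]

lemma permHom_mem (π : Perm (Fin n)) : permHom π ∈ EquivariantPerm J n := fun _ _ => rfl

lemma permHom_mul_baseHom_mul_inv (π : Perm (Fin n)) (v : Fin n → J) :
    permHom π * baseHom v * (permHom π)⁻¹ = baseHom (v ∘ π.symm) := by
  rw [← map_inv]
  ext x <;> simp [Perm.inv_def]

lemma commutatorElement_permHom_baseHom (π : Perm (Fin n)) (v : Fin n → J) :
    ⁅permHom (J := J) π, baseHom v⁆ = baseHom (v ∘ π.symm * v⁻¹) := by
  rw [commutatorElement_def, permHom_mul_baseHom_mul_inv, ← map_inv, ← map_mul]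

lemma apply_of_mem {g : Perm (J × Fin n)} (hg : g ∈ EquivariantPerm J n) (x : J × Fin n) :
    g x = (x.1 * (g (1, x.2)).1, (g (1, x.2)).2) := by
  simpa using hg x.1 (1, x.2)

def toFunEnd : EquivariantPerm J n →* Function.End (Fin n) where
  toFun g i := (g.1 (1, i)).2
  map_one' := rfl
  map_mul' g h := by
    funext i
    show (g.1 (h.1 (1, i))).2 = _
    rw [apply_of_mem g.2 (h.1 (1, i))]
    rfl

def toPermFin : EquivariantPerm J n →* Perm (Fin n) :=
  equivUnitsEnd.symm.toMonoidHom.comp toFunEnd.toHomUnits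

lemma toPermFin_apply (g : EquivariantPerm J n) (i : Fin n) : toPermFin g i = (g.1 (1, i)).2 :=
  rfl

lemma eq_permHom_mul_baseHom (g : EquivariantPerm J n) :
    (g : Perm (J × Fin n)) = permHom (toPermFin g) * baseHom fun i => ((g.1 (1, i)).1)⁻¹ := by
  ext x <;> simp [apply_of_mem g.2 x, toPermFin_apply]

def IsBaseSupportedOn (g : Perm (J × Fin n)) (s : Set (Fin n)) : Prop :=
  ∃ v, g = baseHom v ∧ mulSupport v ⊆ s

lemma IsBaseSupportedOn.commute {g g' : Perm (J × Fin n)} {s s' : Set (Fin n)}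
    (hg : IsBaseSupportedOn g s) (hg' : IsBaseSupportedOn g' s') (h : Disjoint s s') :
    Commute g g' := by
  obtain ⟨v, rfl, hv⟩ := hg
  obtain ⟨v', rfl, hv'⟩ := hg'
  exact (Pi.commute_of_disjoint_mulSupport (h.mono hv hv')).map baseHom

lemma IsBaseSupportedOn.conj {g : Perm (J × Fin n)} {s : Set (Fin n)}
    (hg : IsBaseSupportedOn g s) (h : EquivariantPerm J n) :
    IsBaseSupportedOn ((h : Perm (J × Fin n)) * g * (h : Perm (J × Fin n))⁻¹)
      (toPermFin h '' s) := by
  obtain ⟨v, rfl, hv⟩ := hg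
  set w : Fin n → J := fun i => ((h.1 (1, i)).1)⁻¹
  refine ⟨(w * v * w⁻¹) ∘ (toPermFin h).symm, ?_, ?_⟩
  · rw [eq_permHom_mul_baseHom h, ← permHom_mul_baseHom_mul_inv]
    simp only [mul_inv_rev, map_mul, map_inv, mul_assoc]
    rfl
  · rw [mulSupport_comp_eq_preimage, ← Equiv.image_eq_preimage_symm]
    refine Set.image_mono fun j hj => hv ?_
    simpa [conj_eq_one_iff] using hj

end EquivariantPerm

namespace RubikGroup

open Equiv Equiv.Perm Subgroup EquivariantPerm
open scoped commutatorElement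

variable {J : Type*} [Group J] {n : ℕ}

lemma le_equivariantPerm : RubikGroup J n ≤ EquivariantPerm J n :=
  commutator_le_self _

lemma map_eq_one_of_mem {A : Type*} [CommGroup A] (f : EquivariantPerm J n →* A)
    {g : Perm (J × Fin n)} (hg : g ∈ RubikGroup J n) : f ⟨g, le_equivariantPerm hg⟩ = 1 := by
  rw [RubikGroup, ← map_subtype_commutator] at hg
  obtain ⟨x, hx, rfl⟩ := hg
  exact Abelianization.commutator_subset_ker f hx

def toAlternating : RubikGroup J n →* alternatingGroup (Fin n) :=
  (toPermFin.comp (inclusion le_equivariantPerm)).codRestrict _ fun g =>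
    mem_alternatingGroup.mpr (map_eq_one_of_mem (sign.comp toPermFin) g.2 :)

lemma permHom_mem (hn : 5 ≤ n) {σ : Perm (Fin n)} (hσ : σ ∈ alternatingGroup (Fin n)) :
    permHom σ ∈ RubikGroup J n := by
  rw [← alternatingGroup.commutator_perm_eq (by simpa using hn), commutator_def] at hσ
  have hrange : (⊤ : Subgroup (Perm (Fin n))).map permHom ≤ EquivariantPerm J n :=
    map_le_iff_le_comap.mpr fun σ _ => EquivariantPerm.permHom_mem σ
  have := mem_map_of_mem (permHom (J := J)) hσ
  rw [map_commutator] at this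
  exact commutator_mono hrange hrange this

lemma toAlternating_surjective (hn : 5 ≤ n) : Surjective (toAlternating (J := J) (n := n)) :=
  fun τ => ⟨⟨permHom τ, permHom_mem hn τ.2⟩, Subtype.ext (Equiv.ext fun _ => rfl)⟩

lemma baseHom_mulSingle_mul_mulSingle_inv_mem {i k : Fin n} (hik : i ≠ k) (t : J) :
    baseHom (Pi.mulSingle i t * Pi.mulSingle k t⁻¹) ∈ RubikGroup J n := by
  have h := commutator_mem_commutator (EquivariantPerm.permHom_mem (J := J) (swap i k))
    (baseHom_mem (Pi.mulSingle i t⁻¹))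
  rwa [commutatorElement_permHom_baseHom, Pi.mulSingle_comp_equiv, symm_symm, swap_apply_left,
    ← Pi.mulSingle_inv, inv_inv, (Pi.mulSingle_commute (f := fun _ => J) hik.symm _ _).eq] at h

def prodAbelianization : EquivariantPerm J n →* Abelianization J where
  toFun g := ∏ i, Abelianization.of (g.1 (1, i)).1
  map_one' := by simp
  map_mul' g h := by
    have (i : Fin n) : ((g * h).1 (1, i)).1 = (h.1 (1, i)).1 * (g.1 (1, toPermFin h i)).1 := by
      show (g.1 (h.1 (1, i))).1 = _
      rw [apply_of_mem g.2]
      rfl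
    simp_rw [this, map_mul, Finset.prod_mul_distrib]
    rw [Equiv.prod_comp (toPermFin h) fun j => Abelianization.of (g.1 (1, j)).1, mul_comm]

lemma mem_commutator_of_baseHom_mulSingle_mem {k : Fin n} {u : J}
    (h : baseHom (Pi.mulSingle k u) ∈ RubikGroup J n) : u ∈ commutator J := by
  have := map_eq_one_of_mem prodAbelianization h
  rw [← Abelianization.ker_of, MonoidHom.mem_ker]
  simpa [prodAbelianization, Pi.mulSingle_apply, apply_ite] using this

theorem ker_toAlternating_le {H : Subgroup (RubikGroup J n)} (k : Fin n)
    (hdd : ∀ i, i ≠ k → ∀ t,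
      baseHom (Pi.mulSingle i t * Pi.mulSingle k t⁻¹) ∈ H.map (RubikGroup J n).subtype)
    (hk : ∀ u, baseHom (Pi.mulSingle k u) ∈ RubikGroup J n →
      baseHom (Pi.mulSingle k u) ∈ H.map (RubikGroup J n).subtype) :
    toAlternating.ker ≤ H := by
  intro g hg
  have hbase : (g : Perm (J × Fin n)) = baseHom fun i => ((g.1 (1, i)).1)⁻¹ := by
    have hπ : toPermFin (inclusion le_equivariantPerm g) = 1 := congrArg Subtype.val hg
    rw [← one_mul (baseHom _), ← map_one permHom, ← hπ]
    exact eq_permHom_mul_baseHom (inclusion le_equivariantPerm g)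
  have hU : (fun i => ((g.1 (1, i)).1)⁻¹) ∈ (RubikGroup J n).comap baseHom := by
    rw [mem_comap, ← hbase]
    exact g.2
  have := Pi.le_of_mulSingle_mul_mulSingle_inv_mem (comap_mono (map_subtype_le H)) k hdd hk hU
  rw [mem_comap, ← hbase] at this
  exact (mem_map_iff_mem (subtype_injective _)).mp this

lemma baseHom_mulSingle_mul_mulSingle_inv_mem_commutator (hn : 5 ≤ n) (i k : Fin n) (c : J) :
    baseHom (Pi.mulSingle i c * Pi.mulSingle k c⁻¹) ∈ ⁅RubikGroup J n, RubikGroup J n⁆ := by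
  obtain ⟨j, hji, hjk⟩ := ENat.exists_ne_ne_of_three_le (by simp; omega) i k
  obtain ⟨σ, hσ, hσj, hσi⟩ := exists_mem_alternatingGroup_apply_eq (by simp; omega) hji hjk
  -- `σ` fixes `j` and moves `i` to `k`, so the commutator cancels the entries at `j`.
  have := commutator_mem_commutator (permHom_mem hn hσ)
    (baseHom_mulSingle_mul_mulSingle_inv_mem hji c)
  rw [commutatorElement_permHom_baseHom] at this
  convert this using 2
  rw [Pi.mul_comp, Pi.mulSingle_comp_equiv, Pi.mulSingle_comp_equiv, symm_symm, hσj, hσi]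
  ext x
  simp only [Pi.mul_apply, Pi.inv_apply, Pi.mulSingle_apply]
  split_ifs <;> simp_all

lemma baseHom_mulSingle_mem_commutator (hn : 3 ≤ n) (k : Fin n) {u : J}
    (hu : u ∈ commutator J) :
    baseHom (Pi.mulSingle k u) ∈ ⁅RubikGroup J n, RubikGroup J n⁆ := by
  have h3 : 3 ≤ ENat.card (Fin n) := by simp; omega
  obtain ⟨i, hik, -⟩ := ENat.exists_ne_ne_of_three_le h3 k k
  obtain ⟨j, hji, hjk⟩ := ENat.exists_ne_ne_of_three_le h3 i k
  refine (?_ : commutator J ≤ ⁅RubikGroup J n, RubikGroup J n⁆.comap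
    (baseHom.comp (MonoidHom.mulSingle _ k))) hu
  rw [commutator_def, commutator_le]
  intro g _ h _
  have := commutator_mem_commutator (baseHom_mulSingle_mul_mulSingle_inv_mem hik.symm g)
    (baseHom_mulSingle_mul_mulSingle_inv_mem hjk.symm h)
  rw [← map_commutatorElement] at this
  rw [mem_comap, MonoidHom.comp_apply]
  convert this using 2
  ext x
  simp only [MonoidHom.mulSingle_apply, commutatorElement_def, Pi.mul_apply, Pi.inv_apply,
    Pi.mulSingle_apply]
  split_ifs <;> simp_all

theorem ker_toAlternating_le_commutator (hn : 5 ≤ n) :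
    toAlternating.ker ≤ commutator (RubikGroup J n) := by
  refine ker_toAlternating_le ⟨0, by omega⟩ (fun i _ t => ?_) (fun u hu => ?_) <;>
    rw [map_subtype_commutator]
  · exact baseHom_mulSingle_mul_mulSingle_inv_mem_commutator hn i _ t
  · exact baseHom_mulSingle_mem_commutator (by omega) _ (mem_commutator_of_baseHom_mulSingle_mem hu)

variable {Q : Type*} [Group Q]

theorem commute_of_isBaseSupportedOn (hn : 5 ≤ n) (ψ : RubikGroup J n →* Q)
    (hψ : ∀ τ, ∃ m ∈ ψ.ker, toAlternating m = τ) {a b : RubikGroup J n} {i k i' k' : Fin n}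
    (hik : i ≠ k) (ha : IsBaseSupportedOn (a : Perm (J × Fin n)) {i, k})
    (hb : IsBaseSupportedOn (b : Perm (J × Fin n)) {i', k'}) : Commute (ψ a) (ψ b) := by
  obtain ⟨τ, hτ, hdisj⟩ := exists_mem_alternatingGroup_disjoint (by simpa using hn) hik i' k'
  obtain ⟨m, hm, hmτ⟩ := hψ ⟨τ, hτ⟩
  have ha' := ha.conj (inclusion le_equivariantPerm m)
  rw [show toPermFin (inclusion le_equivariantPerm m) = τ from congrArg Subtype.val hmτ,
    Set.image_pair] at ha'
  have hcomm : Commute (m * a * m⁻¹) b := Subtype.ext (ha'.commute hb hdisj)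
  simpa [MonoidHom.mem_ker.mp hm] using hcomm.map ψ

theorem commute_of_map_ker_eq_top (hn : 5 ≤ n) (ψ : RubikGroup J n →* Q)
    (hψ : ∀ τ, ∃ m ∈ ψ.ker, toAlternating m = τ) (htop : toAlternating.ker.map ψ = ⊤)
    (x y : Q) : Commute x y := by
  let S : Set (RubikGroup J n) :=
    {g | ∃ i k, i ≠ k ∧ IsBaseSupportedOn (g : Perm (J × Fin n)) {i, k}}
  have hS {i k : Fin n} (hik : i ≠ k) {v : Fin n → J} (hv : mulSupport v ⊆ {i, k})
      (hR : baseHom v ∈ RubikGroup J n) : baseHom v ∈ (closure S).map (RubikGroup J n).subtype :=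
    ⟨⟨baseHom v, hR⟩, subset_closure ⟨i, k, hik, v, rfl, hv⟩, rfl⟩
  let k : Fin n := ⟨0, by omega⟩
  have hK : toAlternating.ker ≤ closure S := by
    refine ker_toAlternating_le k (fun i hik t => hS hik ?_ ?_) fun u hu => ?_
    · exact (mulSupport_mul _ _).trans
        (Set.union_subset_union Pi.mulSupport_mulSingle_subset Pi.mulSupport_mulSingle_subset)
    · exact baseHom_mulSingle_mul_mulSingle_inv_mem hik t
    · obtain ⟨i, hik⟩ : ∃ i, i ≠ k := ⟨⟨1, by omega⟩, by simp [k, Fin.ext_iff]⟩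
      exact hS hik (Pi.mulSupport_mulSingle_subset.trans (by simp)) hu
  have hcomm : ∀ a ∈ ψ '' S, ∀ b ∈ ψ '' S, a * b = b * a := by
    rintro _ ⟨a, ⟨i, k, hik, ha⟩, rfl⟩ _ ⟨b, ⟨i', k', -, hb⟩, rfl⟩
    exact commute_of_isBaseSupportedOn hn ψ hψ hik ha hb
  have hle : (⊤ : Subgroup Q) ≤ closure (ψ '' S) := by
    rw [← htop, ← MonoidHom.map_closure]
    exact map_mono hK
  exact Set.centralizer_centralizer_comm_of_comm hcomm _
    (closure_le_centralizer_centralizer _ (hle (mem_top x))) _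
    (closure_le_centralizer_centralizer _ (hle (mem_top y)))

end RubikGroup

open RubikGroup in
/-- for `n ≥ 5`, the alternating group on `Fin n` is the unique simple
quotient of the Rubik group `Rub_J(J × Fin n)`. -/
theorem stmt_10 {J : Type*} [Group J] {n : ℕ} (hn : 5 ≤ n)
    {Q : Type*} [Group Q] [IsSimpleGroup Q]
    (φ : ↥(RubikGroup J n) →* Q) (hφ : Function.Surjective φ) :
    Nonempty (Q ≃* ↥(alternatingGroup (Fin n))) := by
  have := alternatingGroup.isSimpleGroup (α := Fin n) (by simpa using hn)
  by_cases hK : (toAlternating (J := J) (n := n)).ker ≤ φ.ker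
  · exact MonoidHom.nonempty_mulEquiv_of_ker_le (toAlternating_surjective hn) hφ hK
  have htop := MonoidHom.map_ker_eq_top_of_not_ker_le hφ hK
  have hmove (τ : alternatingGroup (Fin n)) : ∃ m ∈ φ.ker, toAlternating m = τ := by
    obtain ⟨x, rfl⟩ := toAlternating_surjective (J := J) hn τ
    exact MonoidHom.exists_mem_ker_apply_eq htop x
  refine absurd ((ker_toAlternating_le_commutator (J := J) hn).trans ?_) hK
  rw [commutator_def (RubikGroup J n), Subgroup.commutator_le]
  intro a _ b _
  rw [MonoidHom.mem_ker, map_commutatorElement, commutatorElement_eq_one_iff_commute]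
  exact commute_of_map_ker_eq_top hn φ hmove htop _ _
end

section
/- Let J be a group, let n ≥ 5, and let X = J × Fin n with J acting by left multiplication on the first coordinate. Then the Rubik group Rub_J(X) is perfect, i.e., it equals its own commutator subgroup. -/
/-!
Identify `Sym_J(X)` with the wreath product `J ≀ Sₙ`: every element is a top-group element
`(j, k) ↦ (j, π k)` composed with a base-group element `(j, k) ↦ (j * (f k)⁻¹, k)`.
Writing `D₁ = Rub_J(X)` and `D₂` for the first two derived subgroups of `Sym_J(X)`, the claim
is `D₁ ≤ D₂`, i.e. that `Sym_J(X) / D₂` is abelian.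
Since `Aₙ` is perfect for `n ≥ 5`, the lifts of even permutations lie in `D₂`. The base element
which is `g` at `i` and `g⁻¹` at `j` is the commutator of a base element with a transposition,
and commuting it once more with a lifted three-cycle shows that it lies in `D₂`.
Consequently `Sym_J(X)` is generated modulo `D₂` by one transposition and the base elements
supported at a single coordinate, and these commute pairwise modulo `D₂`.
-/

open scoped commutatorElement
open Equiv Subgroup

theorem Subgroup.commutator_le_of_closure_sup_eq_top {G : Type*} [Group G] {N : Subgroup G}
    [N.Normal] {S : Set G} (hS : ∀ s ∈ S, ∀ t ∈ S, ⁅s, t⁆ ∈ N) (hgen : closure S ⊔ N = ⊤) :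
    _root_.commutator G ≤ N := by
  rw [← Normal.quotient_commutative_iff_commutator_le]
  have hcomm : ∀ x ∈ QuotientGroup.mk' N '' S, ∀ y ∈ QuotientGroup.mk' N '' S,
      x * y = y * x := by
    rintro _ ⟨s, hs, rfl⟩ _ ⟨t, ht, rfl⟩
    rw [← commute_iff_eq, ← commutatorElement_eq_one_iff_commute, ← map_commutatorElement,
      QuotientGroup.mk'_apply, QuotientGroup.eq_one_iff]
    exact hS s hs t ht
  have htop : closure (QuotientGroup.mk' N '' S) = ⊤ := by
    rw [← MonoidHom.map_closure, ← sup_bot_eq (map _ _), ← QuotientGroup.map_mk'_self N,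
      ← map_sup, hgen, map_top_of_surjective _ (QuotientGroup.mk'_surjective N)]
  have hclosure := isMulCommutative_closure hcomm
  rw [htop] at hclosure
  exact ⟨⟨fun x y => by simpa using hclosure.is_comm.comm ⟨x, mem_top x⟩ ⟨y, mem_top y⟩⟩⟩

namespace EquivariantPerm

variable (J : Type*) [Group J] (n : ℕ)

def base : (Fin n → J) →* EquivariantPerm J n where
  toFun f := ⟨⟨fun x => (x.1 * (f x.2)⁻¹, x.2), fun x => (x.1 * f x.2, x.2),
    fun x => by simp, fun x => by simp⟩, fun j x => by simp [mul_assoc]⟩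
  map_one' := by ext <;> simp
  map_mul' f g := by ext <;> simp [mul_assoc]

def top : Perm (Fin n) →* EquivariantPerm J n where
  toFun π := ⟨prodCongr (Equiv.refl J) π, fun _ _ => rfl⟩
  map_one' := rfl
  map_mul' _ _ := rfl

variable {J n}

@[simp] lemma base_apply (f : Fin n → J) (x : J × Fin n) :
    (base J n f : Perm (J × Fin n)) x = (x.1 * (f x.2)⁻¹, x.2) := rfl

@[simp] lemma top_apply (π : Perm (Fin n)) (x : J × Fin n) :
    (top J n π : Perm (J × Fin n)) x = (x.1, π x.2) := rfl

@[simp] lemma base_symm_apply (f : Fin n → J) (x : J × Fin n) :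
    (base J n f : Perm (J × Fin n)).symm x = (x.1 * f x.2, x.2) := rfl

@[simp] lemma top_symm_apply (π : Perm (Fin n)) (x : J × Fin n) :
    (top J n π : Perm (J × Fin n)).symm x = (x.1, π.symm x.2) := rfl

lemma apply_eq (σ : EquivariantPerm J n) (x : J × Fin n) :
    (σ : Perm (J × Fin n)) x = (x.1 * (σ.1 (1, x.2)).1, (σ.1 (1, x.2)).2) := by
  simpa using σ.2 x.1 (1, x.2)

lemma exists_eq_top_mul_base (σ : EquivariantPerm J n) :
    ∃ (π : Perm (Fin n)) (f : Fin n → J), σ = top J n π * base J n f := by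
  have hsurj : Function.Surjective fun k => (σ.1 (1, k)).2 := by
    intro m
    refine ⟨(σ.1.symm (1, m)).2, ?_⟩
    have h := apply_eq σ (σ.1.symm (1, m))
    rw [Equiv.apply_symm_apply, Prod.ext_iff] at h
    exact h.2.symm
  refine ⟨.ofBijective _ ⟨Finite.injective_iff_surjective.mpr hsurj, hsurj⟩,
    fun k => (σ.1 (1, k)).1⁻¹, Subtype.ext <| Equiv.ext fun x => ?_⟩
  exact (apply_eq σ x).trans (by simp; rfl)

theorem commutator_base_top (f : Fin n → J) (ρ : Perm (Fin n)) :
    ⁅base J n f, top J n ρ⁆ = base J n (f * (f ∘ ρ.symm)⁻¹) := by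
  refine Subtype.ext <| Equiv.ext fun x => ?_
  simp [commutatorElement_def, mul_assoc]

theorem commutator_base_mulSingle_top (i m : Fin n) (g : J) (ρ : Perm (Fin n)) :
    ⁅base J n (Pi.mulSingle i g * (Pi.mulSingle m g)⁻¹), top J n ρ⁆ =
      base J n (Pi.mulSingle i g * (Pi.mulSingle m g)⁻¹ *
        (Pi.mulSingle (ρ i) g * (Pi.mulSingle (ρ m) g)⁻¹)⁻¹) := by
  rw [commutator_base_top, Pi.mul_comp, Pi.inv_comp, Pi.mulSingle_comp_equiv,
    Pi.mulSingle_comp_equiv, symm_symm]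

theorem map_top_alternatingGroup_le (hn : 5 ≤ n) :
    (alternatingGroup (Fin n)).map (top J n) ≤ derivedSeries (EquivariantPerm J n) 2 := by
  have : Group.IsPerfect (alternatingGroup (Fin n)) :=
    ⟨commutator_alternatingGroup_eq_top (by simpa using hn)⟩
  calc (alternatingGroup (Fin n)).map (top J n)
      = (derivedSeries (alternatingGroup (Fin n)) 2).map
          ((top J n).comp (alternatingGroup (Fin n)).subtype) := by
        rw [Group.IsPerfect.derivedSeries_eq_top, ← map_map, ← MonoidHom.range_eq_map,
          range_subtype]
    _ ≤ _ := map_derivedSeries_le_derivedSeries _ 2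

theorem base_mulSingle_mul_inv_mem (hn : 5 ≤ n) (i j : Fin n) (g : J) :
    base J n (Pi.mulSingle i g * (Pi.mulSingle j g)⁻¹) ∈
      derivedSeries (EquivariantPerm J n) 2 := by
  rcases eq_or_ne i j with rfl | hij
  · simp
  obtain ⟨m, -, hm⟩ := Finset.exists_mem_notMem_of_card_lt_card (s := {i, j}) (t := .univ)
    (by simpa using Finset.card_le_two.trans_lt (by omega))
  obtain ⟨l, -, hl⟩ := Finset.exists_mem_notMem_of_card_lt_card (s := {i, j, m}) (t := .univ)
    (by simpa using Finset.card_le_three.trans_lt (by omega))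
  simp only [Finset.mem_insert, Finset.mem_singleton, not_or] at hm hl
  have hd : base J n (Pi.mulSingle i g * (Pi.mulSingle m g)⁻¹) ∈
      derivedSeries (EquivariantPerm J n) 1 := by
    have h := commutator_base_top (J := J) (Pi.mulSingle i g) (swap i m)
    rw [Pi.mulSingle_comp_equiv, symm_symm, swap_apply_left] at h
    rw [← h]
    exact commutator_mem_commutator (mem_top _) (mem_top _)
  have hc : top J n (swap i l * swap i j) ∈ derivedSeries (EquivariantPerm J n) 2 :=
    map_top_alternatingGroup_le hn ⟨_,
      (Perm.isThreeCycle_swap_mul_swap_same (Ne.symm hl.1) hij hl.2.1).mem_alternatingGroup, rfl⟩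
  -- the three-cycle fixes `m`, so commuting with it moves the pair `(i, m)` to `(i, j)`
  have h := commutator_base_mulSingle_top i m g (swap i l * swap i j)
  simp only [Perm.mul_apply, swap_apply_left, swap_apply_of_ne_of_ne hm.1 hm.2,
    swap_apply_of_ne_of_ne hm.1 (Ne.symm hl.2.2),
    swap_apply_of_ne_of_ne hij.symm (Ne.symm hl.2.1)] at h
  rw [mul_inv_rev, inv_inv, mul_assoc, inv_mul_cancel_left] at h
  rw [← h]
  exact commutator_mem_commutator hd
    (derivedSeries_antitone (G := EquivariantPerm J n) one_le_two hc)

theorem base_commutatorElement_mulSingle_mem (hn : 5 ≤ n) (i : Fin n) (x y : J) :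
    base J n ⁅(Pi.mulSingle i x : Fin n → J), (Pi.mulSingle i y : Fin n → J)⁆ ∈
      derivedSeries (EquivariantPerm J n) 2 := by
  obtain ⟨j, -, hj⟩ := Finset.exists_mem_notMem_of_card_lt_card (s := {i}) (t := .univ)
    (by simp; omega)
  obtain ⟨k, -, hk⟩ := Finset.exists_mem_notMem_of_card_lt_card (s := {i, j}) (t := .univ)
    (by simpa using Finset.card_le_two.trans_lt (by omega))
  simp only [Finset.mem_insert, Finset.mem_singleton, not_or] at hj hk
  have h : ⁅(Pi.mulSingle i x * (Pi.mulSingle j x)⁻¹ : Fin n → J),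
      (Pi.mulSingle i y * (Pi.mulSingle k y)⁻¹ : Fin n → J)⁆ =
        ⁅(Pi.mulSingle i x : Fin n → J), (Pi.mulSingle i y : Fin n → J)⁆ := by
    funext t
    simp only [commutatorElement_def, Pi.mul_apply, Pi.inv_apply, Pi.mulSingle_apply]
    split_ifs <;> simp_all
  rw [← h, map_commutatorElement]
  have hle := derivedSeries_antitone (G := EquivariantPerm J n) one_le_two
  exact commutator_mem_commutator (hle (base_mulSingle_mul_inv_mem hn i j x))
    (hle (base_mulSingle_mul_inv_mem hn i k y))

theorem commutator_mem_of_mem_insert_range (hn : 5 ≤ n) (a b : Fin n) :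
    ∀ s ∈ insert (top J n (swap a b)) (Set.range fun g => base J n (Pi.mulSingle a g)),
    ∀ t ∈ insert (top J n (swap a b)) (Set.range fun g => base J n (Pi.mulSingle a g)),
      ⁅s, t⁆ ∈ derivedSeries (EquivariantPerm J n) 2 := by
  have hswap (x : J) : ⁅base J n (Pi.mulSingle a x), top J n (swap a b)⁆ ∈
      derivedSeries (EquivariantPerm J n) 2 := by
    rw [commutator_base_top, Pi.mulSingle_comp_equiv, symm_symm, swap_apply_left]
    exact base_mulSingle_mul_inv_mem hn a b x
  rintro s (rfl | ⟨x, rfl⟩) t (rfl | ⟨y, rfl⟩)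
  · rw [commutatorElement_self]
    exact one_mem _
  · rw [← commutatorElement_inv]
    exact inv_mem (hswap y)
  · exact hswap x
  · rw [← map_commutatorElement]
    exact base_commutatorElement_mulSingle_mem hn a x y

theorem closure_insert_range_sup_eq_top (hn : 5 ≤ n) {a b : Fin n} (hab : a ≠ b) :
    closure (insert (top J n (swap a b)) (Set.range fun g => base J n (Pi.mulSingle a g))) ⊔
      derivedSeries (EquivariantPerm J n) 2 = ⊤ := by
  set M := closure (insert (top J n (swap a b)) (Set.range fun g => base J n (Pi.mulSingle a g)))
    ⊔ derivedSeries (EquivariantPerm J n) 2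
  have htop (π : Perm (Fin n)) (hπ : π ∈ alternatingGroup (Fin n)) : top J n π ∈ M :=
    mem_sup_right (map_top_alternatingGroup_le hn ⟨π, hπ, rfl⟩)
  have hswap : top J n (swap a b) ∈ M := mem_sup_left (subset_closure (Set.mem_insert _ _))
  have hbase (i : Fin n) (x : J) : base J n (Pi.mulSingle i x) ∈ M := by
    rw [← inv_mul_cancel_right (Pi.mulSingle i x : Fin n → J) (Pi.mulSingle a x), map_mul]
    exact mul_mem (mem_sup_right (base_mulSingle_mul_inv_mem hn i a x))
      (mem_sup_left (subset_closure (Set.mem_insert_of_mem _ ⟨x, rfl⟩)))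
  refine eq_top_iff.mpr fun σ _ => ?_
  obtain ⟨π, f, rfl⟩ := exists_eq_top_mul_base σ
  refine mul_mem ?_ (pi_mem_of_mulSingle_mem (H := M.comap (base J n)) f fun i => hbase i (f i))
  rcases Int.units_eq_one_or (Perm.sign π) with h | h
  · exact htop π h
  · rw [← swap_mul_self_mul a b π, map_mul]
    refine mul_mem hswap (htop _ ?_)
    rw [Perm.mem_alternatingGroup, map_mul, h, Perm.sign_swap hab]
    rfl

end EquivariantPerm

open EquivariantPerm

/-- for `n ≥ 5`, the Rubik group `Rub_J(J × Fin n)` is perfect: it equals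
its own commutator subgroup. -/
theorem stmt_11 {J : Type*} [Group J] {n : ℕ} (hn : 5 ≤ n) :
    ⁅RubikGroup J n, RubikGroup J n⁆ = RubikGroup J n := by
  have hab : (⟨0, by omega⟩ : Fin n) ≠ ⟨1, by omega⟩ := by simp
  have hperfect : derivedSeries (EquivariantPerm J n) 2 = derivedSeries (EquivariantPerm J n) 1 :=
    le_antisymm (derivedSeries_antitone (G := EquivariantPerm J n) one_le_two) <|
      commutator_le_of_closure_sup_eq_top (commutator_mem_of_mem_insert_range hn _ _)
        (closure_insert_range_sup_eq_top hn hab)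
  have hR : (derivedSeries (EquivariantPerm J n) 1).map (EquivariantPerm J n).subtype =
      RubikGroup J n :=
    map_subtype_commutator _
  rw [← hR, ← map_commutator, ← derivedSeries_succ, hperfect]
end

section
/- Let A be a finite set with |A| ≥ 3 and let n ≥ 2. For distinct indices i, j ∈ Fin n and an even permutation τ of A × A, let g_{i,j,τ} be the permutation of (Fin n → A) defined by (g x)(i) = first component of τ(x(i), x(j)), (g x)(j) = second component of τ(x(i), x(j)), and (g x)(l) = x(l) for l ∉ {i, j}. Then the subgroup of the symmetric group on (Fin n → A) generated by all such permutations g_{i,j,τ} equals the alternating group on (Fin n → A). -/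
/-!
Every gate is even: `τ ↦ g_{i,j,τ}` is a homomorphism and `alternatingGroup (A × A)` is generated
by elements of order 3, which `sign` must kill.

For the converse, induct on `n`, splitting `A^(n+2) = A × A × A^n`. The gates at positions `0, 1`
realise `alternatingGroup (A × A)` acting on the first two factors, and the induction hypothesis
realises `alternatingGroup (A × A^n)` acting on the last two. A subgroup `K` of
`Perm (U × V × W)` containing both of these groups is 2-transitive, and it contains a 3-cycle:
the commutator of two permutations whose supports meet in a single point. By Jordan's theorem
`K` then contains the whole alternating group.
-/

open Equiv Equiv.Perm MulAction
open scoped commutatorElement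

namespace Equiv.Perm

variable {α : Type*} [Fintype α] [DecidableEq α]

theorem isThreeCycle_commutator_of_supports_meet_at {σ τ : Perm α} {p : α}
    (hσ : σ p ≠ p) (hτ : τ p ≠ p) (h : ∀ x, σ x ≠ x → τ x ≠ x → x = p) :
    IsThreeCycle ⁅σ, τ⁆ := by
  have hττ : τ (τ p) ≠ τ p := fun e => hτ (τ.injective e)
  have key : ⁅σ, τ⁆ = swap p (τ p) * swap p (σ p) := by
    rw [commutatorElement_def, mul_inv_eq_iff_eq_mul, mul_inv_eq_iff_eq_mul]
    ext x
    simp only [Perm.mul_apply, swap_apply_def]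
    grind [Equiv.apply_eq_iff_eq]
  rw [key]
  exact isThreeCycle_swap_mul_swap_same hτ.symm hσ.symm (by grind [Equiv.apply_eq_iff_eq])

theorem alternatingGroup_le_ker_s13 (f : Perm α →* ℤˣ) : alternatingGroup α ≤ f.ker := by
  rw [← closure_three_cycles_eq_alternating, Subgroup.closure_le]
  intro c hc
  have hc3 : f c ^ 3 = 1 := by rw [← map_pow, ← hc.orderOf, pow_orderOf_eq_one, map_one]
  rwa [pow_succ, Int.units_sq, one_mul] at hc3

theorem exists_mem_alternatingGroup_apply_eq_apply_eq (hα : 4 ≤ Fintype.card α)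
    {a b c d : α} (h : a = b ↔ c = d) :
    ∃ σ ∈ alternatingGroup α, σ a = c ∧ σ b = d := by
  have h2 : IsMultiplyPretransitive (alternatingGroup α) α 2 := by
    have := alternatingGroup.isMultiplyPretransitive α
    rw [Nat.card_eq_fintype_card] at this
    exact isMultiplyPretransitive_of_le (n := Fintype.card α - 2) (by omega)
      (by rw [Nat.card_eq_fintype_card]; omega)
  rw [is_two_pretransitive_iff] at h2
  have exists_other (e : α) : ∃ e', e ≠ e' :=
    (Fintype.exists_ne_of_one_lt_card (by omega) e).imp fun _ h => h.symm
  by_cases hab : a = b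
  · obtain ⟨b', hb'⟩ := exists_other a
    obtain ⟨d', hd'⟩ := exists_other c
    obtain ⟨σ, hσa, -⟩ := h2 hb' hd'
    exact ⟨σ, σ.2, hσa, by rw [← hab, ← h.mp hab]; exact hσa⟩
  · obtain ⟨σ, hσa, hσb⟩ := h2 hab (mt h.mpr hab)
    exact ⟨σ, σ.2, hσa, hσb⟩

end Equiv.Perm

namespace BinaryGate

section TripleProduct

variable {U V W : Type*}

def onLeftPair (σ : Perm (U × V)) : Perm (U × V × W) :=
  (prodAssoc U V W).permCongr (σ.prodCongr (Equiv.refl W))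

def onRightPair (σ : Perm (V × W)) : Perm (U × V × W) :=
  (Equiv.refl U).prodCongr σ

@[simp]
theorem onLeftPair_apply (σ : Perm (U × V)) (x : U × V × W) :
    onLeftPair σ x = ((σ (x.1, x.2.1)).1, (σ (x.1, x.2.1)).2, x.2.2) := rfl

@[simp]
theorem onRightPair_apply (σ : Perm (V × W)) (x : U × V × W) :
    onRightPair σ x = (x.1, σ x.2) := rfl

variable [Fintype U] [DecidableEq U] [Fintype V] [DecidableEq V] [Fintype W] [DecidableEq W]
  {K : Subgroup (Perm (U × V × W))}

theorem exists_mem_apply_eq_apply_eq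
    (hK₁ : ∀ σ ∈ alternatingGroup (U × V), onLeftPair σ ∈ K)
    (hK₂ : ∀ σ ∈ alternatingGroup (V × W), onRightPair σ ∈ K)
    (hUV : 4 ≤ Fintype.card (U × V)) (hVW : 4 ≤ Fintype.card (V × W))
    (u₀ : U) (w₀ : W) {v₀ v₁ : V} (hv : v₀ ≠ v₁) {x y : U × V × W} (hxy : x ≠ y) :
    ∃ g ∈ K, g x = (u₀, v₀, w₀) ∧ g y = (u₀, v₁, w₀) := by
  -- `σ₁` must identify the images of `x` and `y` exactly when their `U × V` parts agree
  set v' := if (x.1, x.2.1) = (y.1, y.2.1) then v₀ else v₁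
  obtain ⟨σ₁, hσ₁, hσ₁x, hσ₁y⟩ := exists_mem_alternatingGroup_apply_eq_apply_eq hUV
    (a := (x.1, x.2.1)) (b := (y.1, y.2.1)) (c := (u₀, v₀)) (d := (u₀, v')) (by
      unfold v'; split_ifs with h <;> simp [h, hv])
  obtain ⟨σ₂, hσ₂, hσ₂x, hσ₂y⟩ := exists_mem_alternatingGroup_apply_eq_apply_eq hVW
    (a := (v₀, x.2.2)) (b := (v', y.2.2)) (c := (v₀, w₀)) (d := (v₁, w₀)) (by
      unfold v'; split_ifs with h
      · simp only [Prod.mk.injEq] at h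
        simpa [hv] using fun h' => hxy (Prod.ext h.1 (Prod.ext h.2 h'))
      · simp [hv])
  refine ⟨onRightPair σ₂ * onLeftPair σ₁, K.mul_mem (hK₂ σ₂ hσ₂) (hK₁ σ₁ hσ₁), ?_, ?_⟩
  · simp [hσ₁x, hσ₂x]
  · simp [hσ₁y, hσ₂y]

theorem isMultiplyPretransitive_two
    (hK₁ : ∀ σ ∈ alternatingGroup (U × V), onLeftPair σ ∈ K)
    (hK₂ : ∀ σ ∈ alternatingGroup (V × W), onRightPair σ ∈ K)
    (hU : 2 ≤ Fintype.card U) (hV : 3 ≤ Fintype.card V) (hW : 2 ≤ Fintype.card W) :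
    IsMultiplyPretransitive K (U × V × W) 2 := by
  have hUV : 4 ≤ Fintype.card (U × V) := by rw [Fintype.card_prod]; nlinarith
  have hVW : 4 ≤ Fintype.card (V × W) := by rw [Fintype.card_prod]; nlinarith
  obtain ⟨u₀⟩ : Nonempty U := Fintype.card_pos_iff.mp (by omega)
  obtain ⟨w₀⟩ : Nonempty W := Fintype.card_pos_iff.mp (by omega)
  obtain ⟨v₀, v₁, hv⟩ := Fintype.exists_pair_of_one_lt_card (by omega : 1 < Fintype.card V)
  rw [is_two_pretransitive_iff]
  intro a b c d hab hcd
  obtain ⟨g, hg, hga, hgb⟩ := exists_mem_apply_eq_apply_eq hK₁ hK₂ hUV hVW u₀ w₀ hv hab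
  obtain ⟨h, hh, hhc, hhd⟩ := exists_mem_apply_eq_apply_eq hK₁ hK₂ hUV hVW u₀ w₀ hv hcd
  refine ⟨⟨h⁻¹ * g, K.mul_mem (K.inv_mem hh) hg⟩, ?_, ?_⟩
  · simp [Subgroup.smul_def, Perm.smul_def, hga, ← hhc]
  · simp [Subgroup.smul_def, Perm.smul_def, hgb, ← hhd]

theorem exists_isThreeCycle_mem
    (hK₁ : ∀ σ ∈ alternatingGroup (U × V), onLeftPair σ ∈ K)
    (hK₂ : ∀ σ ∈ alternatingGroup (V × W), onRightPair σ ∈ K)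
    (hU : 2 ≤ Fintype.card U) (hV : 3 ≤ Fintype.card V) (hW : 2 ≤ Fintype.card W) :
    ∃ c ∈ K, IsThreeCycle c := by
  obtain ⟨u₀, u₁, hu⟩ := Fintype.exists_pair_of_one_lt_card (by omega : 1 < Fintype.card U)
  obtain ⟨w₀, w₁, hw⟩ := Fintype.exists_pair_of_one_lt_card (by omega : 1 < Fintype.card W)
  obtain ⟨v₁, v₂, v₃, h₁₂, h₁₃, h₂₃⟩ :=
    Fintype.two_lt_card_iff.mp (by omega : 2 < Fintype.card V)
  -- the lifted supports `σ.support × W` and `U × ρ.support` meet only in `(u₀, v₁, w₀)`,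
  -- because `v₂ ∉ {v₁, v₃}`
  set σ := swap (u₀, v₁) (u₀, v₂) * swap (u₀, v₂) (u₁, v₂)
  set ρ := swap (v₁, w₀) (v₃, w₀) * swap (v₃, w₀) (v₃, w₁)
  have hσ : σ ∈ alternatingGroup (U × V) := by simp [σ, h₁₂, hu]
  have hρ : ρ ∈ alternatingGroup (V × W) := by simp [ρ, h₁₃, hw]
  have hσ_supp : σ.support = {(u₀, v₁), (u₀, v₂), (u₁, v₂)} :=
    support_swap_mul_swap (by simp [h₁₂, hu])
  have hρ_supp : ρ.support = {(v₁, w₀), (v₃, w₀), (v₃, w₁)} :=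
    support_swap_mul_swap (by simp [h₁₃, hw])
  have hσK := hK₁ σ hσ
  have hρK := hK₂ ρ hρ
  refine ⟨_, K.mul_mem (K.mul_mem (K.mul_mem hσK hρK) (K.inv_mem hσK)) (K.inv_mem hρK),
    isThreeCycle_commutator_of_supports_meet_at (p := (u₀, v₁, w₀)) ?_ ?_ ?_⟩
  · simpa [Prod.ext_iff] using mem_support.mp (by simp [hσ_supp] : (u₀, v₁) ∈ σ.support)
  · simpa [Prod.ext_iff] using mem_support.mp (by simp [hρ_supp] : (v₁, w₀) ∈ ρ.support)
  · rintro ⟨u, v, w⟩ h₁ h₂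
    have huv : (u, v) ∈ σ.support := mem_support.mpr fun e => h₁ (by simp [e])
    have hvw : (v, w) ∈ ρ.support := mem_support.mpr fun e => h₂ (by simp [e])
    simp only [hσ_supp, hρ_supp, Finset.mem_insert, Finset.mem_singleton, Prod.mk.injEq]
      at huv hvw
    grind

theorem alternatingGroup_le_of_onLeftPair_of_onRightPair
    (hK₁ : ∀ σ ∈ alternatingGroup (U × V), onLeftPair σ ∈ K)
    (hK₂ : ∀ σ ∈ alternatingGroup (V × W), onRightPair σ ∈ K)
    (hU : 2 ≤ Fintype.card U) (hV : 3 ≤ Fintype.card V) (hW : 2 ≤ Fintype.card W) :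
    alternatingGroup (U × V × W) ≤ K := by
  obtain ⟨c, hcK, hc⟩ := exists_isThreeCycle_mem hK₁ hK₂ hU hV hW
  exact alternatingGroup_le_of_isPreprimitive_of_isThreeCycle_mem
    (isPreprimitive_of_is_two_pretransitive (isMultiplyPretransitive_two hK₁ hK₂ hU hV hW)) hc hcK

end TripleProduct

section Gates

variable {A : Type*} {n : ℕ}

def IsGateAt (i j : Fin n) (τ : Perm (A × A)) (g : Perm (Fin n → A)) : Prop :=
  ∀ x : Fin n → A, g x i = (τ (x i, x j)).1 ∧ g x j = (τ (x i, x j)).2 ∧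
    ∀ l : Fin n, l ≠ i → l ≠ j → g x l = x l

def gates (A : Type*) [Fintype A] [DecidableEq A] (n : ℕ) : Set (Perm (Fin n → A)) :=
  {g | ∃ (i j : Fin n) (τ : Perm (A × A)), i ≠ j ∧ sign τ = 1 ∧ IsGateAt i j τ g}

variable {i j : Fin n}

def gateFun (i j : Fin n) (τ : Perm (A × A)) (x : Fin n → A) : Fin n → A :=
  Function.update (Function.update x i (τ (x i, x j)).1) j (τ (x i, x j)).2

theorem gateFun_spec (hij : i ≠ j) (τ : Perm (A × A)) (x : Fin n → A) :
    gateFun i j τ x i = (τ (x i, x j)).1 ∧ gateFun i j τ x j = (τ (x i, x j)).2 ∧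
      ∀ l, l ≠ i → l ≠ j → gateFun i j τ x l = x l := by
  refine ⟨?_, ?_, fun l hli hlj => ?_⟩ <;> simp [gateFun, *]

theorem gateFun_mul (hij : i ≠ j) (τ τ' : Perm (A × A)) (x : Fin n → A) :
    gateFun i j (τ * τ') x = gateFun i j τ (gateFun i j τ' x) := by
  funext l
  by_cases hli : l = i <;> by_cases hlj : l = j <;>
    simp [gateFun, Function.update_apply, hli, hlj, hij]

theorem gateFun_one (x : Fin n → A) : gateFun i j 1 x = x := by
  simp [gateFun]

def gate (hij : i ≠ j) : Perm (A × A) →* Perm (Fin n → A) where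
  toFun τ :=
    { toFun := gateFun i j τ
      invFun := gateFun i j τ⁻¹
      left_inv x := by rw [← gateFun_mul hij, inv_mul_cancel, gateFun_one]
      right_inv x := by rw [← gateFun_mul hij, mul_inv_cancel, gateFun_one] }
  map_one' := Equiv.ext gateFun_one
  map_mul' τ τ' := Equiv.ext (gateFun_mul hij τ τ')

theorem IsGateAt.eq_gate (hij : i ≠ j) {τ : Perm (A × A)} {g : Perm (Fin n → A)}
    (hg : IsGateAt i j τ g) : g = gate hij τ := by
  ext x l
  obtain ⟨hi, hj, hl⟩ := hg x
  obtain ⟨hi', hj', hl'⟩ := gateFun_spec hij τ x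
  change g x l = gateFun i j τ x l
  by_cases hli : l = i
  · rw [hli, hi, hi']
  by_cases hlj : l = j
  · rw [hlj, hj, hj']
  rw [hl l hli hlj, hl' l hli hlj]

theorem closure_gates_le_alternatingGroup [Fintype A] [DecidableEq A] :
    Subgroup.closure (gates A n) ≤ alternatingGroup (Fin n → A) := by
  rw [Subgroup.closure_le]
  rintro g ⟨i, j, τ, hij, hτ, hg⟩
  rw [hg.eq_gate hij]
  exact alternatingGroup_le_ker_s13 (sign.comp (gate hij)) hτ

end Gates

section Induction

variable {A : Type*} {n : ℕ}

def consLift : Perm (Fin n → A) →* Perm (Fin (n + 1) → A) :=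
  (Fin.consEquiv fun _ => A).permCongrHom.toMonoidHom.comp
    { toFun g := (Equiv.refl A).prodCongr g
      map_one' := rfl
      map_mul' _ _ := rfl }

theorem consLift_apply (g : Perm (Fin n → A)) (x : Fin (n + 1) → A) :
    consLift g x = Fin.cons (x 0) (g (Fin.tail x)) := rfl

theorem IsGateAt.consLift {i j : Fin n} {τ : Perm (A × A)} {g : Perm (Fin n → A)}
    (hg : IsGateAt i j τ g) : IsGateAt i.succ j.succ τ (consLift g) := by
  intro x
  obtain ⟨hi, hj, hl⟩ := hg (Fin.tail x)
  refine ⟨by simpa [consLift_apply, Fin.tail] using hi,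
    by simpa [consLift_apply, Fin.tail] using hj, fun l hli hlj => ?_⟩
  cases l using Fin.cases with
  | zero => simp [consLift_apply]
  | succ l =>
    simpa [consLift_apply, Fin.tail] using
      hl l (mt (congrArg Fin.succ) hli) (mt (congrArg Fin.succ) hlj)

def consCons (A : Type*) (n : ℕ) : A × A × (Fin n → A) ≃ (Fin (n + 2) → A) :=
  ((Equiv.refl A).prodCongr (Fin.consEquiv fun _ => A)).trans (Fin.consEquiv fun _ => A)

theorem isGateAt_permCongr_onLeftPair (τ : Perm (A × A)) :
    IsGateAt 0 1 τ ((consCons A n).permCongr (onLeftPair τ)) := by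
  intro x
  refine ⟨by simp [consCons, Fin.tail], by simp [consCons, Fin.tail], fun l h0 h1 => ?_⟩
  cases l using Fin.cases with
  | zero => exact absurd rfl h0
  | succ l =>
    cases l using Fin.cases with
    | zero => exact absurd rfl h1
    | succ l => simp [consCons, Fin.tail]

theorem permCongr_onRightPair (σ : Perm (A × (Fin n → A))) :
    (consCons A n).permCongr (onRightPair σ) =
      consLift ((Fin.consEquiv fun _ => A).permCongr σ) := by
  ext x l
  simp [consCons, consLift_apply]

variable [Fintype A] [DecidableEq A]

theorem consLift_mem_closure_gates {g : Perm (Fin n → A)}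
    (hg : g ∈ Subgroup.closure (gates A n)) :
    consLift g ∈ Subgroup.closure (gates A (n + 1)) := by
  have : Subgroup.closure (gates A n) ≤ (Subgroup.closure (gates A (n + 1))).comap consLift := by
    rw [Subgroup.closure_le]
    rintro g ⟨i, j, τ, hij, hτ, hg⟩
    exact Subgroup.subset_closure
      ⟨i.succ, j.succ, τ, (Fin.succ_injective _).ne hij, hτ, hg.consLift⟩
  exact this hg

theorem alternatingGroup_le_closure_gates_two :
    alternatingGroup (Fin 2 → A) ≤ Subgroup.closure (gates A 2) := by
  intro σ hσ
  refine Subgroup.subset_closure ⟨0, 1, (finTwoArrowEquiv A).permCongr σ, by decide,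
    by rwa [sign_permCongr], fun x => ?_⟩
  have hx : (finTwoArrowEquiv A).symm (x 0, x 1) = x := by ext l; fin_cases l <;> rfl
  simp only [permCongr_apply, hx]
  exact ⟨rfl, rfl, fun l h0 h1 => absurd (by fin_cases l <;> simp_all) h0⟩

theorem alternatingGroup_le_closure_gates (hA : 3 ≤ Fintype.card A) (k : ℕ) :
    alternatingGroup (Fin (k + 2) → A) ≤ Subgroup.closure (gates A (k + 2)) := by
  induction k with
  | zero => exact alternatingGroup_le_closure_gates_two
  | succ k ih =>
    have hW : 2 ≤ Fintype.card (Fin (k + 1) → A) := by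
      rw [Fintype.card_fun, Fintype.card_fin]
      exact le_trans (by omega) (Nat.le_self_pow k.succ_ne_zero _)
    let e := consCons A (k + 1)
    let K := (Subgroup.closure (gates A (k + 1 + 2))).comap e.permCongrHom.toMonoidHom
    have hK : alternatingGroup (A × A × (Fin (k + 1) → A)) ≤ K := by
      refine alternatingGroup_le_of_onLeftPair_of_onRightPair (fun τ hτ => ?_) (fun σ hσ => ?_)
        (by omega) hA hW
      · exact Subgroup.subset_closure ⟨0, 1, τ, by simp, hτ, isGateAt_permCongr_onLeftPair τ⟩
      · change e.permCongr (onRightPair σ) ∈ Subgroup.closure (gates A (k + 1 + 2))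
        rw [permCongr_onRightPair]
        exact consLift_mem_closure_gates (ih (by rwa [mem_alternatingGroup, sign_permCongr]))
    intro σ hσ
    have hσ' : e.symm.permCongr σ ∈ alternatingGroup _ := by
      rwa [mem_alternatingGroup, sign_permCongr]
    simpa [K, ← permCongr_symm] using hK hσ'

end Induction

end BinaryGate

/-- for an alphabet `A` with `|A| ≥ 3` and `n ≥ 2`, the binary reversible
gates given by even permutations of `A × A` applied at pairs of distinct positions
generate the alternating group on `Fin n → A`. -/
theorem stmt_13 {A : Type*} [Fintype A] [DecidableEq A] (hA : 3 ≤ Fintype.card A)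
    {n : ℕ} (hn : 2 ≤ n) :
    Subgroup.closure {g : Equiv.Perm (Fin n → A) |
      ∃ (i j : Fin n) (τ : Equiv.Perm (A × A)), i ≠ j ∧ Equiv.Perm.sign τ = 1 ∧
        ∀ x : Fin n → A,
          g x i = (τ (x i, x j)).1 ∧ g x j = (τ (x i, x j)).2 ∧
          ∀ l : Fin n, l ≠ i → l ≠ j → g x l = x l} =
      alternatingGroup (Fin n → A) := by
  change Subgroup.closure (BinaryGate.gates A n) = _
  obtain ⟨k, rfl⟩ := Nat.exists_eq_add_of_le' hn
  exact le_antisymm BinaryGate.closure_gates_le_alternatingGroup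
    (BinaryGate.alternatingGroup_le_closure_gates hA k)
end

section
/- Let A be a finite set with exactly 2 elements and let n ≥ 3. For pairwise distinct indices i, j, k ∈ Fin n and an even permutation τ of A × A × A, let g_{i,j,k,τ} be the permutation of (Fin n → A) that applies τ to the triple of coordinates (i, j, k) and fixes all other coordinates. Then the subgroup of the symmetric group on (Fin n → A) generated by all such permutations g_{i,j,k,τ} equals the alternating group on (Fin n → A). -/
/-!
Every gate is even: for a homomorphism `φ` into a permutation group, `sign ∘ φ` is trivial or
equal to `sign`.

Conversely, let `w.gate S τ` apply `τ` on the wires of `w` to exactly those inputs whose other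
wires carry a pattern in `S`. The `τ` for which `w.gate S τ` is generated form a subgroup
normalised by `Alt (A × A × A)` (conjugate by uncontrolled gates), and the commutator of an
`S`-controlled and a `T`-controlled gate is `S ∩ T`-controlled. A gate on other wires that acts
on two wires of `w`, controlled by the value of a third, is a nontrivial singly controlled gate
on `w`; so simplicity of `Alt (A × A × A)` yields all singly controlled even gates, and its
perfectness adds control wires one at a time. Fully controlled gates include the 3-cycles of
points that differ only on three wires. These move a point to any neighbour while fixing another
given point, so a block with two points is closed under changing a coordinate: the group is
primitive, and Jordan's theorem (a primitive group containing a 3-cycle contains the alternating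
group) concludes.
-/

open Equiv Equiv.Perm Function Set
open scoped commutatorElement Pointwise

namespace Equiv.Perm

section Controlled

variable {B C : Type*}

open Classical in
noncomputable def controlled (S : Set C) : Perm B →* Perm (B × C) where
  toFun τ := prodCongrLeft fun c => if c ∈ S then τ else 1
  map_one' := by ext ⟨b, c⟩ <;> simp
  map_mul' σ τ := by ext ⟨b, c⟩ <;> by_cases hc : c ∈ S <;> simp [hc]

variable {S T : Set C} {b : B} {c : C}

lemma controlled_apply_of_mem (τ : Perm B) (hc : c ∈ S) :
    controlled S τ (b, c) = (τ b, c) := by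
  simp [controlled, hc]

lemma controlled_apply_of_notMem (τ : Perm B) (hc : c ∉ S) :
    controlled S τ (b, c) = (b, c) := by
  simp [controlled, hc]

@[simp] lemma controlled_apply_snd (τ : Perm B) (p : B × C) : (controlled S τ p).2 = p.2 := by
  simp [controlled]

lemma controlled_univ_conj (ρ τ : Perm B) :
    controlled univ ρ * controlled S τ * (controlled univ ρ)⁻¹ =
      controlled S (ρ * τ * ρ⁻¹) := by
  ext ⟨b, c⟩ <;> by_cases hc : c ∈ S <;> simp [controlled, hc]

lemma controlled_commutator (σ τ : Perm B) :
    ⁅controlled S σ, controlled T τ⁆ = controlled (S ∩ T) ⁅σ, τ⁆ := by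
  ext ⟨b, c⟩ <;> by_cases hS : c ∈ S <;> by_cases hT : c ∈ T <;>
    simp [controlled, commutatorElement_def, Perm.one_def, hS, hT]

lemma controlled_singleton_swap [DecidableEq B] [DecidableEq C] (b b' : B) :
    controlled {c} (swap b b') = swap (b, c) (b', c) := by
  ext ⟨x, y⟩ <;> by_cases hy : y = c <;>
    simp [controlled_apply_of_mem, controlled_apply_of_notMem, hy, swap_apply_def] <;>
    split_ifs <;> simp_all

end Controlled

variable {α β : Type*} [Fintype α] [DecidableEq α] [Fintype β] [DecidableEq β]

lemma map_mem_alternatingGroup (φ : Perm α →* Perm β) {τ : Perm α}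
    (hτ : τ ∈ alternatingGroup α) : φ τ ∈ alternatingGroup β := by
  rw [mem_alternatingGroup] at hτ ⊢
  by_cases hs : Surjective (sign.comp φ)
  · simpa [hτ] using DFunLike.congr_fun (eq_sign_of_surjective_hom hs) τ
  · by_contra h
    refine hs fun u => ?_
    rcases Int.units_eq_one_or u with rfl | rfl
    · exact ⟨1, by simp⟩
    · exact ⟨τ, (Int.units_eq_one_or _).resolve_left h⟩

lemma alternatingGroup_le_of_forall_conj_mem (h5 : 5 ≤ Nat.card α) {K : Subgroup (Perm α)}
    (hK : ∀ ρ ∈ alternatingGroup α, ∀ τ ∈ K, ρ * τ * ρ⁻¹ ∈ K) {τ₀ : Perm α}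
    (hτ₀ : τ₀ ∈ K) (hτ₀' : τ₀ ∈ alternatingGroup α) (hne : τ₀ ≠ 1) :
    alternatingGroup α ≤ K := by
  let N := K.subgroupOf (alternatingGroup α)
  have : N.Normal := ⟨fun τ hτ ρ => hK ρ ρ.2 τ hτ⟩
  refine Subgroup.subgroupOf_eq_top.mp <|
    (alternatingGroup.normal_subgroup_eq_bot_or_eq_top h5).resolve_left fun hN => hne ?_
  have : (⟨τ₀, hτ₀'⟩ : alternatingGroup α) ∈ N := hτ₀
  rw [show N = ⊥ from hN, Subgroup.mem_bot] at this
  exact congrArg Subtype.val this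

end Equiv.Perm

lemma five_le_card_cube (A : Type*) [Fintype A] [Nontrivial A] : 5 ≤ Nat.card (A × A × A) := by
  have := Fintype.one_lt_card (α := A)
  simp only [Nat.card_eq_fintype_card, Fintype.card_prod]
  nlinarith

lemma eq_univ_of_forall_update_mem {ι α : Type*} [Fintype ι] [DecidableEq ι]
    {S : Set (ι → α)} {x : ι → α} (hx : x ∈ S)
    (hS : ∀ u ∈ S, ∀ i a, update u i a ∈ S) : S = univ := by
  refine eq_univ_of_forall fun y => ?_
  have key (s : Finset ι) : s.piecewise y x ∈ S := by
    induction s using Finset.induction_on with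
    | empty => simpa
    | insert i s _ ih => simpa [Finset.piecewise_insert] using hS _ ih i (y i)
  simpa using key Finset.univ

structure Wires (n : ℕ) where
  i : Fin n
  j : Fin n
  k : Fin n
  hij : i ≠ j
  hik : i ≠ k
  hjk : j ≠ k

namespace Wires

variable {n : ℕ} {A : Type*} (w : Wires n)

lemma exists_i_eq (hn : 3 ≤ n) (c : Fin n) : ∃ w : Wires n, w.i = c := by
  have : 1 < (Finset.univ.erase c).card := by
    rw [Finset.card_erase_of_mem (Finset.mem_univ c), Finset.card_univ, Fintype.card_fin]
    omega
  obtain ⟨j, hj, k, hk, hjk⟩ := Finset.one_lt_card.1 this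
  exact ⟨⟨c, j, k, (Finset.ne_of_mem_erase hj).symm, (Finset.ne_of_mem_erase hk).symm, hjk⟩,
    rfl⟩

abbrev Rest : Type := {l : Fin n // l ≠ w.i ∧ l ≠ w.j ∧ l ≠ w.k}

def split : (Fin n → A) ≃ (A × A × A) × (w.Rest → A) where
  toFun x := ((x w.i, x w.j, x w.k), fun l => x l)
  invFun p l :=
    if hi : l = w.i then p.1.1 else if hj : l = w.j then p.1.2.1
    else if hk : l = w.k then p.1.2.2 else p.2 ⟨l, hi, hj, hk⟩
  left_inv x := by
    funext l
    dsimp only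
    split_ifs <;> simp_all
  right_inv := by
    rintro ⟨⟨a, b, c⟩, r⟩
    refine Prod.ext ?_ (funext fun l => ?_)
    · simp [w.hij.symm, w.hik.symm, w.hjk.symm]
    · simp [l.2.1, l.2.2.1, l.2.2.2]

@[simp] lemma split_apply (x : Fin n → A) :
    w.split x = ((x w.i, x w.j, x w.k), fun l : w.Rest => x l) :=
  rfl

@[simp] lemma split_symm_apply_i (p : (A × A × A) × (w.Rest → A)) :
    w.split.symm p w.i = p.1.1 := by
  simp [split]

@[simp] lemma split_symm_apply_j (p : (A × A × A) × (w.Rest → A)) :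
    w.split.symm p w.j = p.1.2.1 := by
  simp [split, w.hij.symm]

@[simp] lemma split_symm_apply_k (p : (A × A × A) × (w.Rest → A)) :
    w.split.symm p w.k = p.1.2.2 := by
  simp [split, w.hik.symm, w.hjk.symm]

@[simp] lemma split_symm_apply_rest (p : (A × A × A) × (w.Rest → A)) (l : w.Rest) :
    w.split.symm p l = p.2 l := by
  simp [split, l.2.1, l.2.2.1, l.2.2.2]

noncomputable def gate (S : Set (w.Rest → A)) : Perm (A × A × A) →* Perm (Fin n → A) :=
  w.split.symm.permCongrHom.toMonoidHom.comp (controlled S)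

lemma gate_apply (S : Set (w.Rest → A)) (τ : Perm (A × A × A)) (x : Fin n → A) :
    w.gate S τ x = w.split.symm (controlled S τ (w.split x)) :=
  rfl

lemma gate_univ_eq_iff (τ : Perm (A × A × A)) (g : Perm (Fin n → A)) :
    w.gate univ τ = g ↔ ∀ x : Fin n → A,
      g x w.i = (τ (x w.i, x w.j, x w.k)).1 ∧ g x w.j = (τ (x w.i, x w.j, x w.k)).2.1 ∧
      g x w.k = (τ (x w.i, x w.j, x w.k)).2.2 ∧
      ∀ l, l ≠ w.i → l ≠ w.j → l ≠ w.k → g x l = x l := by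
  rw [Equiv.ext_iff]
  refine forall_congr' fun x => ?_
  rw [gate_apply, split_apply, controlled_apply_of_mem _ (mem_univ _), Equiv.symm_apply_eq,
    eq_comm, split_apply]
  simp [Prod.ext_iff, funext_iff, and_assoc]

lemma gate_univ_conj (S : Set (w.Rest → A)) (ρ τ : Perm (A × A × A)) :
    w.gate univ ρ * w.gate S τ * (w.gate univ ρ)⁻¹ = w.gate S (ρ * τ * ρ⁻¹) := by
  simp only [gate, MonoidHom.comp_apply]
  rw [← controlled_univ_conj, map_mul, map_mul, map_inv]

lemma gate_commutator (S T : Set (w.Rest → A)) (σ τ : Perm (A × A × A)) :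
    ⁅w.gate S σ, w.gate T τ⁆ = w.gate (S ∩ T) ⁅σ, τ⁆ := by
  simp only [gate, MonoidHom.comp_apply, ← map_commutatorElement, controlled_commutator]

lemma gate_singleton_swap [DecidableEq A] (r : w.Rest → A) (t t' : A × A × A) :
    w.gate {r} (swap t t') = swap (w.split.symm (t, r)) (w.split.symm (t', r)) := by
  rw [gate, MonoidHom.comp_apply, controlled_singleton_swap]
  exact symm_trans_swap_trans _ _ _

lemma gate_eval_prodCongrRight_eq_gate_univ [DecidableEq A] (c : w.Rest) (a : A)
    (γ : Perm (A × A)) :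
    w.gate {r | r c = a} (prodCongrRight fun _ => γ) =
      (⟨c, w.j, w.k, c.2.2.1, c.2.2.2, w.hjk⟩ : Wires n).gate univ (prodExtendRight a γ) := by
  rw [eq_comm, gate_univ_eq_iff]
  intro x
  have hl (l : Fin n) (hlc : l ≠ c) (hlj : l ≠ w.j) (hlk : l ≠ w.k) :
      w.gate {r | r c = a} (prodCongrRight fun _ => γ) x l = x l := by
    by_cases hli : l = w.i
    · subst hli
      by_cases hx : x c = a <;>
        simp [gate_apply, controlled_apply_of_mem, controlled_apply_of_notMem, hx]
    · exact (w.split_symm_apply_rest _ ⟨l, hli, hlj, hlk⟩).trans (by simp)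
  refine ⟨?_, ?_, ?_, hl⟩ <;> by_cases hx : x c = a <;>
    simp [gate_apply, controlled_apply_of_mem, controlled_apply_of_notMem,
      prodExtendRight_apply_ne, hx]

end Wires

section GateGroup

variable {n : ℕ} {A : Type*} [Fintype A] [DecidableEq A]

variable (n A) in
def reversibleGates : Set (Perm (Fin n → A)) :=
  {g | ∃ (i j k : Fin n) (τ : Perm (A × A × A)),
    i ≠ j ∧ i ≠ k ∧ j ≠ k ∧ sign τ = 1 ∧
    ∀ x : Fin n → A,
      g x i = (τ (x i, x j, x k)).1 ∧
      g x j = (τ (x i, x j, x k)).2.1 ∧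
      g x k = (τ (x i, x j, x k)).2.2 ∧
      ∀ l : Fin n, l ≠ i → l ≠ j → l ≠ k → g x l = x l}

variable (n A) in
abbrev gateGroup : Subgroup (Perm (Fin n → A)) :=
  Subgroup.closure (reversibleGates n A)

lemma mem_reversibleGates_iff {g : Perm (Fin n → A)} :
    g ∈ reversibleGates n A ↔
      ∃ w : Wires n, ∃ τ ∈ alternatingGroup (A × A × A), w.gate univ τ = g := by
  constructor
  · rintro ⟨i, j, k, τ, hij, hik, hjk, hτ, hg⟩
    exact ⟨⟨i, j, k, hij, hik, hjk⟩, τ, hτ, (Wires.gate_univ_eq_iff _ _ _).2 hg⟩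
  · rintro ⟨w, τ, hτ, hg⟩
    exact ⟨w.i, w.j, w.k, τ, w.hij, w.hik, w.hjk, hτ, (w.gate_univ_eq_iff _ _).1 hg⟩

lemma reversibleGates_subset_alternatingGroup :
    reversibleGates n A ⊆ alternatingGroup (Fin n → A) := by
  intro g hg
  obtain ⟨w, τ, hτ, rfl⟩ := mem_reversibleGates_iff.1 hg
  exact map_mem_alternatingGroup _ hτ

namespace Wires

variable (w : Wires n)

lemma alternatingGroup_le_comap_gate_univ :
    alternatingGroup (A × A × A) ≤ (gateGroup n A).comap (w.gate univ) :=
  fun τ hτ => Subgroup.subset_closure (mem_reversibleGates_iff.2 ⟨w, τ, hτ, rfl⟩)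

variable [Nontrivial A]

lemma alternatingGroup_le_comap_gate_inter {S T : Set (w.Rest → A)}
    (hS : alternatingGroup (A × A × A) ≤ (gateGroup n A).comap (w.gate S))
    (hT : alternatingGroup (A × A × A) ≤ (gateGroup n A).comap (w.gate T)) :
    alternatingGroup (A × A × A) ≤ (gateGroup n A).comap (w.gate (S ∩ T)) := by
  rw [← commutator_alternatingGroup_eq_self (five_le_card_cube A), Subgroup.commutator_le]
  intro σ hσ τ hτ
  rw [Subgroup.mem_comap, ← gate_commutator, commutatorElement_def]
  have hσ' := hS hσ
  have hτ' := hT hτ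
  exact mul_mem (mul_mem (mul_mem hσ' hτ') (inv_mem hσ')) (inv_mem hτ')

lemma alternatingGroup_le_comap_gate_of_mem {S : Set (w.Rest → A)} {τ₀ : Perm (A × A × A)}
    (hτ₀ : τ₀ ∈ alternatingGroup (A × A × A)) (hne : τ₀ ≠ 1)
    (hmem : w.gate S τ₀ ∈ gateGroup n A) :
    alternatingGroup (A × A × A) ≤ (gateGroup n A).comap (w.gate S) := by
  refine alternatingGroup_le_of_forall_conj_mem (five_le_card_cube A) (fun ρ hρ τ hτ => ?_)
    hmem hτ₀ hne
  have hρ' := w.alternatingGroup_le_comap_gate_univ hρ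
  rw [Subgroup.mem_comap, ← gate_univ_conj]
  exact mul_mem (mul_mem hρ' hτ) (inv_mem hρ')

lemma alternatingGroup_le_comap_gate_eval (c : w.Rest) (a : A) :
    alternatingGroup (A × A × A) ≤ (gateGroup n A).comap (w.gate {r | r c = a}) := by
  have : Nontrivial (alternatingGroup (A × A)) := by
    refine alternatingGroup.nontrivial_of_three_le_card ?_
    have := Fintype.one_lt_card (α := A)
    simp only [Nat.card_eq_fintype_card, Fintype.card_prod]
    nlinarith
  obtain ⟨⟨γ, hγ⟩, hγ1⟩ := exists_ne (1 : alternatingGroup (A × A))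
  obtain ⟨p, hp⟩ : ∃ p, γ p ≠ p := by
    by_contra! h
    exact hγ1 (Subtype.ext (Equiv.ext h))
  obtain ⟨b⟩ := (inferInstance : Nonempty A)
  refine w.alternatingGroup_le_comap_gate_of_mem (τ₀ := prodCongrRight fun _ => γ) ?_ ?_ ?_
  · simp [mem_alternatingGroup, sign_prodCongrRight, mem_alternatingGroup.1 hγ]
  · intro h
    exact hp (by simpa using congr(($h) (b, p)))
  · rw [gate_eval_prodCongrRight_eq_gate_univ]
    exact alternatingGroup_le_comap_gate_univ _ (by
      rwa [mem_alternatingGroup, sign_prodExtendRight, ← mem_alternatingGroup])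

lemma alternatingGroup_le_comap_gate_forall_mem_eq (W : Finset w.Rest) (p : w.Rest → A) :
    alternatingGroup (A × A × A) ≤
      (gateGroup n A).comap (w.gate {r | ∀ l ∈ W, r l = p l}) := by
  induction W using Finset.induction_on with
  | empty => simpa using w.alternatingGroup_le_comap_gate_univ
  | insert c W _ ih =>
    have : {r : w.Rest → A | ∀ l ∈ insert c W, r l = p l} =
        {r | ∀ l ∈ W, r l = p l} ∩ {r | r c = p c} := by
      ext
      simp [and_comm]
    rw [this]
    exact w.alternatingGroup_le_comap_gate_inter ih (w.alternatingGroup_le_comap_gate_eval c (p c))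

lemma swap_mul_swap_mem_gateGroup {x y z : Fin n → A}
    (hxy : x ≠ y) (hxz : x ≠ z) (hyz : y ≠ z)
    (hy : (w.split y).2 = (w.split x).2) (hz : (w.split z).2 = (w.split x).2) :
    swap x y * swap x z ∈ gateGroup n A := by
  obtain ⟨⟨s, r⟩, rfl⟩ := w.split.symm.surjective x
  obtain ⟨⟨t, r'⟩, rfl⟩ := w.split.symm.surjective y
  obtain ⟨⟨u, r''⟩, rfl⟩ := w.split.symm.surjective z
  simp only [apply_symm_apply] at hy hz
  subst r' r''
  simp only [ne_eq, EmbeddingLike.apply_eq_iff_eq, Prod.mk.injEq, and_true] at hxy hxz hyz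
  have hS : ({r} : Set (w.Rest → A)) = {q | ∀ l ∈ Finset.univ, q l = r l} := by
    ext
    simp [funext_iff]
  rw [← gate_singleton_swap, ← gate_singleton_swap, ← map_mul, hS]
  exact w.alternatingGroup_le_comap_gate_forall_mem_eq Finset.univ r
    (isThreeCycle_swap_mul_swap_same hxy hxz hyz).mem_alternatingGroup

end Wires

variable [Nontrivial A]

lemma exists_mem_gateGroup_apply_eq_update (hn : 3 ≤ n) {u u' : Fin n → A} {c : Fin n} {a : A}
    (ha : a ≠ u c) (hu : u' ≠ u) (hv : u' ≠ update u c a) :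
    ∃ g ∈ gateGroup n A, g u = update u c a ∧ g u' = u' := by
  obtain ⟨w, rfl⟩ := Wires.exists_i_eq hn c
  have hcard : ({(w.split u).1, (w.split (update u w.i a)).1, (w.split u').1} :
      Finset (A × A × A)).card < (Finset.univ : Finset (A × A × A)).card := by
    refine Finset.card_le_three.trans_lt ?_
    rw [Finset.card_univ, ← Nat.card_eq_fintype_card]
    linarith [five_le_card_cube A]
  obtain ⟨t, -, ht⟩ := Finset.exists_mem_notMem_of_card_lt_card hcard
  simp only [Finset.mem_insert, Finset.mem_singleton, not_or] at ht
  set v := update u w.i a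
  set x := w.split.symm (t, (w.split u).2)
  have hx1 : (w.split x).1 = t := by simp [x]
  have hux : u ≠ x := fun h => ht.1 (h ▸ hx1).symm
  have hvx : v ≠ x := fun h => ht.2.1 (h ▸ hx1).symm
  have hu'x : u' ≠ x := fun h => ht.2.2 (h ▸ hx1).symm
  have huv : u ≠ v := fun h => ha (by simpa [v] using (congrFun h w.i).symm)
  refine ⟨swap u x * swap u v,
    w.swap_mul_swap_mem_gateGroup hux huv hvx.symm (by simp [x]) ?_, ?_, ?_⟩
  · funext l
    simp [v, l.2.1]
  · simp [swap_apply_of_ne_of_ne huv.symm hvx]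
  · simp [swap_apply_of_ne_of_ne hu hv, swap_apply_of_ne_of_ne hu hu'x]

lemma exists_isThreeCycle_mem_gateGroup (hn : 3 ≤ n) :
    ∃ g ∈ gateGroup n A, g.IsThreeCycle := by
  obtain ⟨w, -⟩ := Wires.exists_i_eq hn ⟨0, by omega⟩
  obtain ⟨a, b, hab⟩ := exists_pair_ne A
  let x : Fin n → A := fun _ => a
  have hxy : x ≠ update x w.i b := fun h => hab (by simpa [x] using congrFun h w.i)
  have hxz : x ≠ update x w.j b := fun h => hab (by simpa [x] using congrFun h w.j)
  have hyz : update x w.i b ≠ update x w.j b := fun h => hab (by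
    simpa [x, w.hij.symm] using congrFun h w.j)
  refine ⟨_, w.swap_mul_swap_mem_gateGroup hxy hxz hyz ?_ ?_,
    isThreeCycle_swap_mul_swap_same hxy hxz hyz⟩ <;>
  · funext l
    simp [l.2.1, l.2.2.1]

lemma isPreprimitive_gateGroup (hn : 3 ≤ n) :
    MulAction.IsPreprimitive (gateGroup n A) (Fin n → A) := by
  obtain ⟨g, hg, hg3⟩ := exists_isThreeCycle_mem_gateGroup (A := A) hn
  obtain ⟨x, hx⟩ : ∃ x, g x ≠ x := by
    by_contra! h
    exact hg3.ne_one (Equiv.ext h)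
  refine .mk' (fun h => hx ?_) fun {B} hB => or_iff_not_imp_left.2 fun hBnt => ?_
  · have hfix : x ∈ MulAction.fixedPoints (gateGroup n A) _ := by
      rw [h]
      trivial
    exact hfix ⟨g, hg⟩
  obtain ⟨y, hy, z, hz, hyz⟩ := Set.not_subsingleton_iff.1 hBnt
  refine eq_univ_of_forall_update_mem hy fun u hu c a => ?_
  by_contra hv
  obtain ⟨u', hu', hu'u⟩ : ∃ u' ∈ B, u' ≠ u := by
    by_cases hyu : y = u
    · exact ⟨z, hz, hyu ▸ hyz.symm⟩
    · exact ⟨y, hy, hyu⟩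
  have ha : a ≠ u c := by
    rintro rfl
    exact hv (by simpa using hu)
  obtain ⟨g, hg, hgu, hgu'⟩ :=
    exists_mem_gateGroup_apply_eq_update hn ha hu'u fun h => hv (h ▸ hu')
  have hgB : (⟨g, hg⟩ : gateGroup n A) • B = B :=
    hB.smul_eq_of_mem hu' (by simpa [Subgroup.smul_def, hgu'] using hu')
  exact hv (hgB ▸ hgu ▸ Set.smul_mem_smul_set hu)

end GateGroup

/-- for an alphabet `A` with exactly 2 elements and `n ≥ 3`, the ternary
reversible gates given by even permutations of `A × A × A` applied at triples of pairwise
distinct positions generate the alternating group on `Fin n → A`. -/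
theorem stmt_14 {A : Type*} [Fintype A] [DecidableEq A] (hA : Fintype.card A = 2)
    {n : ℕ} (hn : 3 ≤ n) :
    Subgroup.closure {g : Equiv.Perm (Fin n → A) |
      ∃ (i j k : Fin n) (τ : Equiv.Perm (A × A × A)),
        i ≠ j ∧ i ≠ k ∧ j ≠ k ∧ Equiv.Perm.sign τ = 1 ∧
        ∀ x : Fin n → A,
          g x i = (τ (x i, x j, x k)).1 ∧
          g x j = (τ (x i, x j, x k)).2.1 ∧
          g x k = (τ (x i, x j, x k)).2.2 ∧
          ∀ l : Fin n, l ≠ i → l ≠ j → l ≠ k → g x l = x l} =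
      alternatingGroup (Fin n → A) := by
  have : Nontrivial A := Fintype.one_lt_card_iff_nontrivial.1 (by omega)
  change gateGroup n A = _
  refine le_antisymm ((Subgroup.closure_le _).2 reversibleGates_subset_alternatingGroup) ?_
  obtain ⟨g, hg, hg3⟩ := exists_isThreeCycle_mem_gateGroup (A := A) hn
  exact alternatingGroup_le_of_isPreprimitive_of_isThreeCycle_mem
    (isPreprimitive_gateGroup hn) hg3 hg
end

section
/- Let Γ be a finitely generated group and G a finite group. Then the number of group homomorphisms from Γ to G equals the sum, over all subgroups J of G, of |Aut(J)| times the number of normal subgroups N of Γ such that Γ/N is isomorphic to J. In symbols: |Hom(Γ, G)| = Σ_{J ≤ G} |Aut(J)| · |{N ⊴ Γ : Γ/N ≅ J}|. -/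
open scoped BigOperators

open Function QuotientGroup

section Aux

variable {Γ : Type*} [Group Γ] {G : Type*} [Group G]

/-- A f.g. group has finitely many homs into a finite group. -/
lemma homFinite (hfg : Group.FG Γ) [Finite G] : Finite (Γ →* G) := by
  obtain ⟨S, hS⟩ := hfg.out
  exact Finite.of_injective (fun f => (fun s : (S : Set Γ) => f s))
    (fun f g h => MonoidHom.eq_of_eqOn_dense hS (fun x hx => congrFun h ⟨x, hx⟩))

lemma exists_aut {H : Type*} [Group H] {f1 f2 : Γ →* H} (h1 : Surjective f1)
    (h2 : Surjective f2) (h : f1.ker = f2.ker) :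
    ∃ α : MulAut H, α.toMonoidHom.comp f1 = f2 := by
  refine ⟨(quotientKerEquivOfSurjective f1 h1).symm.trans
    ((quotientMulEquivOfEq h).trans (quotientKerEquivOfSurjective f2 h2)), ?_⟩
  ext x
  have e1 : (quotientKerEquivOfSurjective f1 h1).symm (f1 x) = QuotientGroup.mk x := by
    apply (quotientKerEquivOfSurjective f1 h1).injective
    rw [MulEquiv.apply_symm_apply]
    rfl
  show ((quotientMulEquivOfEq h).trans (quotientKerEquivOfSurjective f2 h2))
      ((quotientKerEquivOfSurjective f1 h1).symm (f1 x)) = f2 x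
  rw [e1]
  show (quotientKerEquivOfSurjective f2 h2) ((quotientMulEquivOfEq h) (QuotientGroup.mk x)) = f2 x
  rw [quotientMulEquivOfEq_mk]
  rfl

variable (J : Subgroup G)

/-- Homs with range `J` correspond to surjections onto `J`. -/
def rangeEquiv : {f : Γ →* G // f.range = J} ≃ {g : Γ →* ↥J // Surjective ⇑g} where
  toFun f := ⟨f.1.codRestrict J (fun x => f.2.le ⟨x, rfl⟩), by
    rintro ⟨j, hj⟩
    rw [← f.2] at hj
    obtain ⟨x, hx⟩ := hj
    exact ⟨x, Subtype.ext hx⟩⟩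
  invFun g := ⟨J.subtype.comp g.1, by
    rw [MonoidHom.range_comp, MonoidHom.range_eq_top.2 g.2, ← MonoidHom.range_eq_map,
      Subgroup.range_subtype]⟩
  left_inv f := Subtype.ext (MonoidHom.ext fun x => rfl)
  right_inv g := Subtype.ext (MonoidHom.ext fun x => Subtype.ext rfl)

/-- Canonical surjection associated to an element of the index type. -/
noncomputable def canonHom (N : {N : Subgroup Γ // ∃ _ : N.Normal, Nonempty ((Γ ⧸ N) ≃* ↥J)}) :
    Γ →* ↥J :=
  letI : N.1.Normal := N.2.choose
  (N.2.choose_spec.some.toMonoidHom).comp (QuotientGroup.mk' N.1)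

lemma canonHom_surjective (N : {N : Subgroup Γ // ∃ _ : N.Normal, Nonempty ((Γ ⧸ N) ≃* ↥J)}) : Surjective ⇑(canonHom J N) := by
  letI : N.1.Normal := N.2.choose
  exact (N.2.choose_spec.some.surjective).comp (QuotientGroup.mk'_surjective N.1)

lemma canonHom_ker (N : {N : Subgroup Γ // ∃ _ : N.Normal, Nonempty ((Γ ⧸ N) ≃* ↥J)}) : (canonHom J N).ker = N.1 := by
  letI : N.1.Normal := N.2.choose
  ext x
  simp only [canonHom, MonoidHom.mem_ker, MonoidHom.comp_apply, MulEquiv.coe_toMonoidHom,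
    EmbeddingLike.map_eq_one_iff]
  exact (QuotientGroup.eq_one_iff x).trans Iff.rfl

lemma surjEquiv_card (hfg : Group.FG Γ) [Finite G] :
    Nat.card {g : Γ →* ↥J // Surjective ⇑g} =
      Nat.card (MulAut ↥J) *
        Nat.card {N : Subgroup Γ // ∃ _ : N.Normal, Nonempty ((Γ ⧸ N) ≃* ↥J)} := by
  haveI : Finite (Γ →* ↥J) := homFinite hfg
  set T := {N : Subgroup Γ // ∃ _ : N.Normal, Nonempty ((Γ ⧸ N) ≃* ↥J)}
  have hbij : Function.Bijective
      (fun p : T × MulAut ↥J => (⟨p.2.toMonoidHom.comp (canonHom J p.1),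
        p.2.surjective.comp (canonHom_surjective J p.1)⟩ :
          {g : Γ →* ↥J // Surjective ⇑g})) := by
    constructor
    · rintro ⟨N, α⟩ ⟨M, β⟩ h
      have hker : ∀ (P : T) (γ : MulAut ↥J), (γ.toMonoidHom.comp (canonHom J P)).ker = P.1 := by
        intro P γ
        rw [← canonHom_ker J P]
        ext x
        simp [MonoidHom.mem_ker]
      have hv : α.toMonoidHom.comp (canonHom J N) = β.toMonoidHom.comp (canonHom J M) :=
        congrArg Subtype.val h
      have hNM : N = M := Subtype.ext (by rw [← hker N α, ← hker M β, hv])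
      subst hNM
      have hcomp : α.toMonoidHom.comp (canonHom J N) = β.toMonoidHom.comp (canonHom J N) :=
        congrArg Subtype.val h
      have hαβ : α = β := MulEquiv.ext fun j => by
        obtain ⟨x, rfl⟩ := canonHom_surjective J N j
        simpa using DFunLike.congr_fun hcomp x
      rw [hαβ]
    · rintro ⟨g, hg⟩
      have hN : ∃ _ : g.ker.Normal, Nonempty ((Γ ⧸ g.ker) ≃* ↥J) :=
        ⟨inferInstance, ⟨quotientKerEquivOfSurjective g hg⟩⟩
      set N : T := ⟨g.ker, hN⟩ with hNdef
      obtain ⟨α, hα⟩ := exists_aut (canonHom_surjective J N) hg (canonHom_ker J N)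
      exact ⟨(N, α), Subtype.ext hα⟩
  calc Nat.card {g : Γ →* ↥J // Surjective ⇑g}
      = Nat.card (T × MulAut ↥J) := (Nat.card_eq_of_bijective _ hbij).symm
    _ = Nat.card (MulAut ↥J) * Nat.card T := by rw [Nat.card_prod, mul_comm]

end Aux

/-- for a finitely generated group `Γ` and a finite group `G`, the number
of homomorphisms `Γ → G` equals the sum, over all subgroups `J ≤ G`, of `|Aut J|` times
the number of normal subgroups `N ⊴ Γ` with `Γ/N ≅ J`. -/
theorem stmt_17 {Γ : Type*} [Group Γ] (hfg : Group.FG Γ)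
    {G : Type*} [Group G] [Finite G] :
    Nat.card (Γ →* G) =
      ∑ᶠ J : Subgroup G, Nat.card (MulAut ↥J) *
        Nat.card {N : Subgroup Γ // ∃ _ : N.Normal, Nonempty ((Γ ⧸ N) ≃* ↥J)} := by
  classical
  haveI : Finite (Γ →* G) := homFinite hfg
  haveI : Fintype (Γ →* G) := Fintype.ofFinite _
  haveI : Fintype (Subgroup G) := Fintype.ofFinite _
  haveI : ∀ J : Subgroup G, Fintype {f : Γ →* G // f.range = J} := fun J => Fintype.ofFinite _
  rw [finsum_eq_sum_of_fintype]
  calc Nat.card (Γ →* G)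
      = Nat.card (Σ J : Subgroup G, {f : Γ →* G // f.range = J}) :=
        Nat.card_congr (Equiv.sigmaFiberEquiv _).symm
    _ = ∑ J : Subgroup G, Nat.card {f : Γ →* G // f.range = J} := by
        rw [Nat.card_eq_fintype_card, Fintype.card_sigma]
        exact Finset.sum_congr rfl fun J _ => (Nat.card_eq_fintype_card).symm
    _ = _ := by
        refine Finset.sum_congr rfl fun J _ => ?_
        rw [Nat.card_congr (rangeEquiv J), surjEquiv_card J hfg]
end
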